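/- arXiv:1105.4101 — 6 statements merged into one kernel-verified Lean document; each statement's English description precedes it below -/
import Mathlib

section
/- Let Ω ⊂ ℝ^N be a domain, N ≥ 1, and β ∈ ℝ with β > 1 - N/2. Then for every u ∈ C_c^∞(Ω): (2β + N - 2) · ‖r^{β-1} u‖_{L²(Ω)} ≤ 2 · ‖r^β ∂_r u‖_{L²(Ω)}. -/
open MeasureTheory Real
open scoped RealInnerProductSpace
open Set Filter

lemma aux_bound_radius {h : ℝ → ℝ} (hs : HasCompactSupport h) :
    ∃ R : ℝ, 0 < R ∧ ∀ r : ℝ, R < |r| → h r = 0 := by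
  obtain ⟨R, hR⟩ := hs.isBounded.subset_closedBall 0
  refine ⟨max R 1, lt_of_lt_of_le one_pos (le_max_right _ _), fun r hr => ?_⟩
  apply image_eq_zero_of_notMem_tsupport
  intro hmem
  have := hR hmem
  rw [Metric.mem_closedBall, Real.dist_eq, sub_zero] at this
  exact absurd (this.trans (le_max_left R 1)) (not_le.2 hr)

lemma aux_int {p : ℝ} (hp : -1 < p) {h : ℝ → ℝ} (hh : Continuous h)
    (hs : HasCompactSupport h) :
    IntegrableOn (fun r => r ^ p * h r) (Ioi (0:ℝ)) := by
  obtain ⟨R, hR0, hR⟩ := aux_bound_radius hs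
  obtain ⟨M, hM⟩ := hs.exists_bound_of_continuous hh
  have hmeas : Measurable fun r : ℝ => r ^ p * h r :=
    (measurable_id.pow_const p).mul hh.measurable
  have hIoo : IntegrableOn (fun r : ℝ => M * r ^ p) (Ioo (0:ℝ) R) volume :=
    (((intervalIntegral.integrableOn_Ioo_rpow_iff hR0).2 hp).const_mul M)
  have h1 : IntegrableOn (fun r => r ^ p * h r) (Ioo 0 R) := by
    refine Integrable.mono' hIoo (hmeas.aestronglyMeasurable.restrict) ?_
    filter_upwards [ae_restrict_mem measurableSet_Ioo] with r hr
    have hr0 : (0:ℝ) < r := hr.1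
    rw [Real.norm_eq_abs, abs_mul, abs_of_nonneg (Real.rpow_nonneg hr0.le p), mul_comm M]
    exact mul_le_mul_of_nonneg_left ((Real.norm_eq_abs _).symm ▸ hM r)
      (Real.rpow_nonneg hr0.le p)
  have h2 : IntegrableOn (fun r => r ^ p * h r) (Ioi R) := by
    refine (integrable_zero _ _ _).congr ?_
    filter_upwards [ae_restrict_mem measurableSet_Ioi] with r hr
    rw [hR r (by rw [abs_of_pos (hR0.trans hr)]; exact hr), mul_zero, Pi.zero_apply]
  have h1' : IntegrableOn (fun r => r ^ p * h r) (Ioc 0 R) := by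
    rwa [IntegrableOn, ← Measure.restrict_congr_set Ioo_ae_eq_Ioc]
  have := h1'.union h2
  rwa [Ioc_union_Ioi_eq_Ioi hR0.le] at this

lemma aux_mono {c : ℝ} {g : ℝ → ℝ}
    (hA : IntegrableOn (fun r => r ^ (c-1) * g r ^ 2) (Ioi (0:ℝ)) volume)
    (hB : IntegrableOn (fun r => r ^ (c+1) * deriv g r ^ 2) (Ioi (0:ℝ)) volume)
    (hAB : IntegrableOn (fun r => r ^ c * (g r * deriv g r)) (Ioi (0:ℝ)) volume)
    (hpt : ∀ r ∈ Ioi (0:ℝ), -2 * (r ^ c * (g r * deriv g r)) ≤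
      c/2 * (r ^ (c-1) * g r ^ 2) + 2/c * (r ^ (c+1) * deriv g r ^ 2)) :
    -2 * ∫ r in Ioi (0:ℝ), r ^ c * (g r * deriv g r) ≤
      c/2 * (∫ r in Ioi (0:ℝ), r ^ (c-1) * g r ^ 2)
        + 2/c * ∫ r in Ioi (0:ℝ), r ^ (c+1) * deriv g r ^ 2 := by
  have h1 : ∫ r in Ioi (0:ℝ), -2 * (r ^ c * (g r * deriv g r)) ≤
      ∫ r in Ioi (0:ℝ), (c/2 * (r ^ (c-1) * g r ^ 2) + 2/c * (r ^ (c+1) * deriv g r ^ 2)) :=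
    setIntegral_mono_on (hAB.const_mul (-2))
      ((hA.const_mul (c/2)).add (hB.const_mul (2/c))) measurableSet_Ioi hpt
  rwa [integral_const_mul, integral_add (hA.const_mul (c/2)) (hB.const_mul (2/c)),
    integral_const_mul, integral_const_mul] at h1

set_option maxHeartbeats 1000000 in
lemma oneD {c : ℝ} (hc : 0 < c) {g : ℝ → ℝ} (hg : ContDiff ℝ (⊤ : ℕ∞) g)
    (hs : HasCompactSupport g) :
    c ^ 2 * ∫ r in Ioi (0:ℝ), r ^ (c - 1) * g r ^ 2 ≤
      4 * ∫ r in Ioi (0:ℝ), r ^ (c + 1) * deriv g r ^ 2 := by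
  have hgd : Differentiable ℝ g := hg.differentiable (by simp)
  have hginf : ContDiff ℝ ((⊤:ℕ∞) : WithTop ℕ∞) g := hg.of_le (by simp)
  have hg' : Continuous (deriv g) := (contDiff_infty_iff_deriv.mp hginf).2.continuous
  have hsg2 : HasCompactSupport fun r => g r ^ 2 := hs.comp_left (g := fun y : ℝ => y ^ 2) (by simp)
  have hsd2 : HasCompactSupport fun r => deriv g r ^ 2 := hs.deriv.comp_left (g := fun y : ℝ => y ^ 2) (by simp)
  have hsgg' : HasCompactSupport fun r => g r * deriv g r := by
    apply HasCompactSupport.intro hs.isCompact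
    intro r hr
    rw [image_eq_zero_of_notMem_tsupport hr, zero_mul]
  have hA : IntegrableOn (fun r => r ^ (c-1) * g r ^ 2) (Ioi (0:ℝ)) :=
    aux_int (by linarith) (hg.continuous.pow 2) hsg2
  have hB : IntegrableOn (fun r => r ^ (c+1) * deriv g r ^ 2) (Ioi (0:ℝ)) :=
    aux_int (by linarith) (hg'.pow 2) hsd2
  have hAB : IntegrableOn (fun r => r ^ c * (g r * deriv g r)) (Ioi (0:ℝ)) :=
    aux_int (by linarith) (hg.continuous.mul hg') hsgg'
  set A := ∫ r in Ioi (0:ℝ), r ^ (c - 1) * g r ^ 2 with hAdef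
  set B := ∫ r in Ioi (0:ℝ), r ^ (c + 1) * deriv g r ^ 2 with hBdef
  clear_value A B
  have key : c * A = -2 * ∫ r in Ioi (0:ℝ), r ^ c * (g r * deriv g r) := by
    set F := fun r : ℝ => r ^ c * g r ^ 2 with hF
    have hder : ∀ r ∈ Ioi (0:ℝ), HasDerivAt F
        (c * r ^ (c-1) * g r ^ 2 + r ^ c * (2 * g r * deriv g r)) r := by
      intro r hr
      have h1 : HasDerivAt (fun s : ℝ => s ^ c) (c * r ^ (c-1)) r :=
        Real.hasDerivAt_rpow_const (Or.inl (ne_of_gt hr))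
      have h2 : HasDerivAt (fun s => g s ^ 2) (2 * g r * deriv g r) r := by
        simpa using (hgd r).hasDerivAt.fun_pow 2
      exact h1.mul h2
    have hcont : ContinuousWithinAt F (Ici (0:ℝ)) 0 :=
      ((Real.continuousAt_rpow_const 0 c (Or.inr hc.le)).continuousWithinAt).mul
        ((hg.continuous.pow 2).continuousWithinAt)
    have hint : IntegrableOn
        (fun r => c * r ^ (c-1) * g r ^ 2 + r ^ c * (2 * g r * deriv g r)) (Ioi (0:ℝ)) := by
      apply Integrable.add
      · have := hA.const_mul c
        simpa [mul_assoc] using this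
      · exact IntegrableOn.congr_fun (hAB.const_mul 2) (fun r _ => by ring) measurableSet_Ioi
    have htop : Tendsto F atTop (nhds 0) := by
      obtain ⟨R, hR0, hR⟩ := aux_bound_radius hs
      refine tendsto_const_nhds.congr' ?_
      filter_upwards [eventually_gt_atTop R] with r hr
      rw [hF]
      simp only
      rw [hR r (by rw [abs_of_pos (hR0.trans hr)]; exact hr)]
      ring
    have hIBP := integral_Ioi_of_hasDerivAt_of_tendsto hcont hder hint htop
    have hF0 : F 0 = 0 := by
      simp [hF, Real.zero_rpow hc.ne']
    rw [hF0, sub_zero] at hIBP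
    have hsplit : ∫ r in Ioi (0:ℝ),
        (c * r ^ (c-1) * g r ^ 2 + r ^ c * (2 * g r * deriv g r)) =
        c * A + 2 * ∫ r in Ioi (0:ℝ), r ^ c * (g r * deriv g r) := by
      rw [integral_add]
      · congr 1
        · rw [hAdef, ← integral_const_mul]
          congr 1; ext r; ring
        · rw [← integral_const_mul]
          congr 1; ext r; ring
      · have := hA.const_mul c
        simpa [mul_assoc] using this
      · exact IntegrableOn.congr_fun (hAB.const_mul 2) (fun r _ => by ring) measurableSet_Ioi
    rw [hsplit] at hIBP
    linarith
  have hpt : ∀ r ∈ Ioi (0:ℝ), -2 * (r ^ c * (g r * deriv g r)) ≤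
      c/2 * (r ^ (c-1) * g r ^ 2) + 2/c * (r ^ (c+1) * deriv g r ^ 2) := by
    intro r hr
    have hr0 : (0:ℝ) < r := hr
    set x := r ^ ((c-1)/2) * g r with hxdef
    set y := r ^ ((c+1)/2) * deriv g r with hydef
    have hrp : ∀ p : ℝ, (r ^ p) ^ 2 = r ^ (p * 2) := by
      intro p
      rw [← Real.rpow_natCast (r ^ p) 2, ← Real.rpow_mul hr0.le]
      norm_num
    have hx2 : x ^ 2 = r ^ (c-1) * g r ^ 2 := by
      rw [hxdef, mul_pow, hrp]; norm_num
    have hy2 : y ^ 2 = r ^ (c+1) * deriv g r ^ 2 := by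
      rw [hydef, mul_pow, hrp]; norm_num
    have hxy : x * y = r ^ c * (g r * deriv g r) := by
      have he : (c-1)/2 + (c+1)/2 = c := by ring
      rw [hxdef, hydef, mul_mul_mul_comm, ← Real.rpow_add hr0, he]
    rw [← hx2, ← hy2, ← hxy]
    rw [div_mul_eq_mul_div, div_mul_eq_mul_div, div_add_div _ _ two_ne_zero hc.ne',
      le_div_iff₀ (by positivity)]
    nlinarith [sq_nonneg (c * x + 2 * y), hc]
  have hA0 : 0 ≤ A := hAdef ▸ setIntegral_nonneg measurableSet_Ioi fun r hr =>
    mul_nonneg (Real.rpow_nonneg (le_of_lt hr) _) (sq_nonneg _)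
  have hB0 : 0 ≤ B := hBdef ▸ setIntegral_nonneg measurableSet_Ioi fun r hr =>
    mul_nonneg (Real.rpow_nonneg (le_of_lt hr) _) (sq_nonneg _)
  have intineq : -2 * ∫ r in Ioi (0:ℝ), r ^ c * (g r * deriv g r) ≤ c/2 * A + 2/c * B := by
    rw [hAdef, hBdef]
    exact aux_mono hA hB hAB hpt
  have h4 : c/2 * A ≤ 2/c * B := by linarith [key ▸ intineq]
  calc c ^ 2 * A = 2*c*(c/2 * A) := by ring
    _ ≤ 2*c*(2/c * B) := by
        exact mul_le_mul_of_nonneg_left h4 (by positivity)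
    _ = 4 * B := by field_simp; ring

lemma polar_lintegral {E : Type*} [NormedAddCommGroup E] [NormedSpace ℝ E]
    [MeasurableSpace E] [BorelSpace E] [Nontrivial E] [FiniteDimensional ℝ E]
    (μ : Measure E) [μ.IsAddHaarMeasure] (f : E → ENNReal) (hf : Measurable f) :
    ∫⁻ x, f x ∂μ = ∫⁻ ω : Metric.sphere (0:E) 1,
      ∫⁻ r in Ioi (0:ℝ), ENNReal.ofReal (r ^ (Module.finrank ℝ E - 1)) * f (r • (ω:E))
        ∂volume ∂μ.toSphere := by
  have hfsymm : Measurable fun p : Metric.sphere (0:E) 1 × Ioi (0:ℝ) =>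
      f (((homeomorphUnitSphereProd E).symm p : ({0}ᶜ : Set E)) : E) :=
    hf.comp (continuous_subtype_val.comp
      (homeomorphUnitSphereProd E).symm.continuous).measurable
  have h1 : ∫⁻ x, f x ∂μ = ∫⁻ x : ({(0:E)}ᶜ : Set E), f x ∂(μ.comap Subtype.val) := by
    rw [lintegral_subtype_comap (measurableSet_singleton (0:E)).compl,
      restrict_compl_singleton]
  have h2 : ∀ x : ({(0:E)}ᶜ : Set E),
      f x = f (((homeomorphUnitSphereProd E).symm ((homeomorphUnitSphereProd E) x) :
        ({0}ᶜ : Set E)) : E) := by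
    intro x; rw [Homeomorph.symm_apply_apply]
  rw [h1, lintegral_congr h2,
    (μ.measurePreserving_homeomorphUnitSphereProd).lintegral_comp hfsymm,
    lintegral_prod _ hfsymm.aemeasurable]
  refine lintegral_congr fun ω => ?_
  have hg : Measurable fun r : Ioi (0:ℝ) => f ((r : ℝ) • (ω : E)) :=
    hf.comp ((continuous_subtype_val.smul continuous_const).measurable)
  calc ∫⁻ r : Ioi (0:ℝ),
        f (((homeomorphUnitSphereProd E).symm (ω, r) : ({0}ᶜ : Set E)) : E)
          ∂(Measure.volumeIoiPow (Module.finrank ℝ E - 1))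
      = ∫⁻ r : Ioi (0:ℝ), f ((r : ℝ) • (ω : E))
          ∂(Measure.volumeIoiPow (Module.finrank ℝ E - 1)) := by
        refine lintegral_congr fun r => ?_
        rw [homeomorphUnitSphereProd_symm_apply_coe]
    _ = ∫⁻ r : Ioi (0:ℝ), (fun r : Ioi (0:ℝ) => ENNReal.ofReal ((r:ℝ) ^ (Module.finrank ℝ E - 1)))
          r * f ((r : ℝ) • (ω : E)) ∂(Measure.comap Subtype.val volume) := by
        rw [Measure.volumeIoiPow, lintegral_withDensity_eq_lintegral_mul _
          ((measurable_subtype_coe.pow_const _).ennreal_ofReal) hg]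
        rfl
    _ = ∫⁻ r in Ioi (0:ℝ), ENNReal.ofReal (r ^ (Module.finrank ℝ E - 1)) * f (r • (ω:E))
          ∂volume := by
        exact lintegral_subtype_comap measurableSet_Ioi
          (fun r : ℝ => ENNReal.ofReal (r ^ (Module.finrank ℝ E - 1)) * f (r • (ω:E)))

set_option maxHeartbeats 1000000 in
/-- Lemma A.1(i). For a domain `Ω ⊂ ℝ^N`, `N ≥ 1`, `β > 1 - N/2`
and `u ∈ C_c^∞(Ω)`:
`(2β + N - 2) ‖r^{β-1} u‖_{L²(Ω)} ≤ 2 ‖r^β ∂_r u‖_{L²(Ω)}`. -/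
theorem poincare_weighted (N : ℕ) (hN : 1 ≤ N)
    (Ω : Set (EuclideanSpace ℝ (Fin N))) (hΩ : IsOpen Ω)
    (β : ℝ) (hβ : 1 - (N : ℝ) / 2 < β)
    (u : EuclideanSpace ℝ (Fin N) → ℝ)
    (hu : ContDiff ℝ (⊤ : ℕ∞) u) (hsupp : HasCompactSupport u) (hsuppΩ : tsupport u ⊆ Ω) :
    (2 * β + (N : ℝ) - 2) * Real.sqrt (∫ x in Ω, (‖x‖ ^ (β - 1) * u x) ^ 2) ≤
      2 * Real.sqrt (∫ x in Ω,
        (‖x‖ ^ β * ⟪(‖x‖⁻¹ • x : EuclideanSpace ℝ (Fin N)), gradient u x⟫) ^ 2) := by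
  classical
  haveI : Nonempty (Fin N) := ⟨⟨0, hN⟩⟩
  haveI : Nontrivial (EuclideanSpace ℝ (Fin N)) := inferInstance
  have hN' : (1:ℝ) ≤ N := by exact_mod_cast hN
  set c : ℝ := 2 * β + (N:ℝ) - 2 with hcdef
  have hc : 0 < c := by rw [hcdef]; linarith
  set P : (EuclideanSpace ℝ (Fin N)) → ℝ := fun x => (‖x‖ ^ (β - 1) * u x) ^ 2 with hPdef
  set Q : (EuclideanSpace ℝ (Fin N)) → ℝ := fun x => (‖x‖ ^ β * ⟪(‖x‖⁻¹ • x : (EuclideanSpace ℝ (Fin N))), gradient u x⟫) ^ 2 with hQdef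
  have hgradc : Continuous (gradient u) := by
    have hg : gradient u = fun x => (InnerProductSpace.toDual ℝ (EuclideanSpace ℝ (Fin N))).symm (fderiv ℝ u x) := rfl
    rw [hg]
    exact (LinearIsometryEquiv.continuous _).comp (hu.continuous_fderiv (by simp))
  have hmP : Measurable P := by
    rw [hPdef]
    exact ((measurable_norm.pow_const (β - 1)).mul hu.continuous.measurable).pow_const 2
  have hmQ : Measurable Q := by
    rw [hQdef]
    exact ((measurable_norm.pow_const β).mul
      ((measurable_norm.inv.smul measurable_id).inner hgradc.measurable)).pow_const 2
  -- reduce set integral to full integral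
  have hgrad0 : ∀ x, x ∉ Ω → gradient u x = 0 := by
    intro x hx
    have hxt : x ∉ tsupport u := fun h => hx (hsuppΩ h)
    rw [gradient, fderiv_of_notMem_tsupport _ hxt]
    simp
  have hu0 : ∀ x, x ∉ Ω → u x = 0 := fun x hx =>
    image_eq_zero_of_notMem_tsupport (fun h => hx (hsuppΩ h))
  have hΩP : ∫ x in Ω, P x = ∫ x, P x :=
    setIntegral_eq_integral_of_forall_compl_eq_zero
      (fun x hx => by simp [hPdef, hu0 x hx])
  have hΩQ : ∫ x in Ω, Q x = ∫ x, Q x :=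
    setIntegral_eq_integral_of_forall_compl_eq_zero
      (fun x hx => by simp only [hQdef, hgrad0 x hx]; simp)
  -- to lintegrals
  have hP : ∫ x, P x = (∫⁻ x, ENNReal.ofReal (P x)).toReal :=
    integral_eq_lintegral_of_nonneg_ae (Eventually.of_forall fun x => sq_nonneg _)
      hmP.aestronglyMeasurable
  have hQ : ∫ x, Q x = (∫⁻ x, ENNReal.ofReal (Q x)).toReal :=
    integral_eq_lintegral_of_nonneg_ae (Eventually.of_forall fun x => sq_nonneg _)
      hmQ.aestronglyMeasurable

  -- per-ray functions
  set g : Metric.sphere (0 : EuclideanSpace ℝ (Fin N)) 1 → ℝ → ℝ :=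
    fun ω r => u (r • (ω : EuclideanSpace ℝ (Fin N))) with hgdef
  have hgsm : ∀ ω, ContDiff ℝ (⊤ : ℕ∞) (g ω) := fun ω => hu.comp (contDiff_id.smul contDiff_const)
  obtain ⟨R₀, hRsup₀⟩ := hsupp.isBounded.subset_closedBall 0
  set R : ℝ := max R₀ 1 with hRdef
  have hR0 : (0:ℝ) < R := lt_of_lt_of_le one_pos (le_max_right _ _)
  have hRsup : tsupport u ⊆ Metric.closedBall 0 R :=
    hRsup₀.trans (Metric.closedBall_subset_closedBall (le_max_left _ _))
  have hnorm : ∀ (ω : Metric.sphere (0 : EuclideanSpace ℝ (Fin N)) 1) (r : ℝ), 0 ≤ r →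
      ‖r • (ω : EuclideanSpace ℝ (Fin N))‖ = r := by
    intro ω r hr
    rw [norm_smul, mem_sphere_zero_iff_norm.mp ω.2, mul_one, Real.norm_eq_abs, abs_of_nonneg hr]
  have hgs : ∀ ω, HasCompactSupport (g ω) := by
    intro ω
    apply HasCompactSupport.intro (isCompact_Icc (a := -R) (b := R))
    intro r hr
    show u (r • (ω : EuclideanSpace ℝ (Fin N))) = 0
    apply image_eq_zero_of_notMem_tsupport
    intro hmem
    have h1 : ‖r • (ω : EuclideanSpace ℝ (Fin N))‖ ≤ R := by
      simpa [dist_zero_right] using hRsup hmem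
    rw [norm_smul, mem_sphere_zero_iff_norm.mp ω.2, mul_one, Real.norm_eq_abs] at h1
    exact hr (abs_le.mp h1)
  have hderiv_g : ∀ ω (r : ℝ), deriv (g ω) r =
      ⟪(ω : EuclideanSpace ℝ (Fin N)), gradient u (r • (ω : EuclideanSpace ℝ (Fin N)))⟫ := by
    intro ω r
    have h1 : HasDerivAt (fun s : ℝ => s • (ω : EuclideanSpace ℝ (Fin N)))
        ((1:ℝ) • (ω : EuclideanSpace ℝ (Fin N))) r := (hasDerivAt_id r).smul_const _
    have hd : HasDerivAt (g ω)
        (fderiv ℝ u (r • (ω : EuclideanSpace ℝ (Fin N))) (ω : EuclideanSpace ℝ (Fin N))) r := by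
      have := (hu.differentiable (by simp) _).hasFDerivAt.comp_hasDerivAt r h1
      simp only [one_smul] at this; exact this
    rw [hd.deriv, real_inner_comm, gradient, InnerProductSpace.toDual_symm_apply]
  have hderiv_cont : ∀ ω, Continuous (deriv (g ω)) := by
    intro ω
    rw [funext (hderiv_g ω)]
    exact Continuous.inner continuous_const
      (hgradc.comp (continuous_id.smul continuous_const))
  have hgsupp2 : ∀ ω, HasCompactSupport fun r => g ω r ^ 2 :=
    fun ω => (hgs ω).comp_left (g := fun y : ℝ => y ^ 2) (by simp)
  have hdsupp2 : ∀ ω, HasCompactSupport fun r => deriv (g ω) r ^ 2 :=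
    fun ω => (hgs ω).deriv.comp_left (g := fun y : ℝ => y ^ 2) (by simp)
  have hAint : ∀ ω, IntegrableOn (fun r => r ^ (c-1) * g ω r ^ 2) (Ioi (0:ℝ)) :=
    fun ω => aux_int (by rw [hcdef]; linarith) ((hgsm ω).continuous.pow 2) (hgsupp2 ω)
  have hBint : ∀ ω, IntegrableOn (fun r => r ^ (c+1) * deriv (g ω) r ^ 2) (Ioi (0:ℝ)) :=
    fun ω => aux_int (by rw [hcdef]; linarith) ((hderiv_cont ω).pow 2) (hdsupp2 ω)
  -- pointwise polar identities
  have hrp : ∀ r : ℝ, 0 < r → ∀ p : ℝ, (r ^ p) ^ 2 = r ^ (p * 2) := by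
    intro r hr p
    rw [← Real.rpow_natCast (r ^ p) 2, ← Real.rpow_mul hr.le]
    norm_num
  have hnpow : ∀ r : ℝ, 0 < r → (r : ℝ) ^ (N - 1) = r ^ ((N:ℝ) - 1) := by
    intro r hr
    rw [← Real.rpow_natCast r (N - 1), Nat.cast_sub hN, Nat.cast_one]
  have hPeq : ∀ ω : Metric.sphere (0 : EuclideanSpace ℝ (Fin N)) 1, ∀ r ∈ Ioi (0:ℝ),
      ENNReal.ofReal (r ^ (N - 1)) * ENNReal.ofReal (P (r • (ω : EuclideanSpace ℝ (Fin N)))) =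
      ENNReal.ofReal (r ^ (c-1) * g ω r ^ 2) := by
    intro ω r hr
    have hr0 : (0:ℝ) < r := hr
    rw [← ENNReal.ofReal_mul (pow_nonneg hr0.le _)]
    congr 1
    rw [hPdef]
    simp only
    rw [hnorm ω r hr0.le, mul_pow, hrp r hr0, hnpow r hr0, ← mul_assoc,
      ← Real.rpow_add hr0, hgdef]
    congr 2
    rw [hcdef]; ring
  have hQeq : ∀ ω : Metric.sphere (0 : EuclideanSpace ℝ (Fin N)) 1, ∀ r ∈ Ioi (0:ℝ),
      ENNReal.ofReal (r ^ (N - 1)) * ENNReal.ofReal (Q (r • (ω : EuclideanSpace ℝ (Fin N)))) =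
      ENNReal.ofReal (r ^ (c+1) * deriv (g ω) r ^ 2) := by
    intro ω r hr
    have hr0 : (0:ℝ) < r := hr
    rw [← ENNReal.ofReal_mul (pow_nonneg hr0.le _)]
    congr 1
    rw [hQdef]
    simp only
    have hdir : (‖r • (ω : EuclideanSpace ℝ (Fin N))‖⁻¹ • (r • (ω : EuclideanSpace ℝ (Fin N)))
        : EuclideanSpace ℝ (Fin N)) = (ω : EuclideanSpace ℝ (Fin N)) := by
      rw [hnorm ω r hr0.le, smul_smul, inv_mul_cancel₀ hr0.ne', one_smul]
    rw [hdir, hnorm ω r hr0.le, ← hderiv_g ω r, mul_pow, hrp r hr0, hnpow r hr0, ← mul_assoc,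
      ← Real.rpow_add hr0]
    congr 2
    rw [hcdef]; ring
  -- polar decomposition
  have hfinrank : Module.finrank ℝ (EuclideanSpace ℝ (Fin N)) - 1 = N - 1 := by
    rw [finrank_euclideanSpace_fin]
  have hIP : (∫⁻ x, ENNReal.ofReal (P x)) = ∫⁻ ω,
      ENNReal.ofReal (∫ r in Ioi (0:ℝ), r ^ (c-1) * g ω r ^ 2) ∂(volume.toSphere) := by
    rw [polar_lintegral volume _ hmP.ennreal_ofReal]
    refine lintegral_congr fun ω => ?_
    rw [hfinrank,
      setLIntegral_congr_fun measurableSet_Ioi (fun r hr => hPeq ω r hr)]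
    refine (ofReal_integral_eq_lintegral_ofReal (hAint ω) ?_).symm
    filter_upwards [ae_restrict_mem measurableSet_Ioi] with r hr
    exact mul_nonneg (Real.rpow_nonneg (le_of_lt hr) _) (sq_nonneg _)
  have hIQ : (∫⁻ x, ENNReal.ofReal (Q x)) = ∫⁻ ω,
      ENNReal.ofReal (∫ r in Ioi (0:ℝ), r ^ (c+1) * deriv (g ω) r ^ 2) ∂(volume.toSphere) := by
    rw [polar_lintegral volume _ hmQ.ennreal_ofReal]
    refine lintegral_congr fun ω => ?_
    rw [hfinrank,
      setLIntegral_congr_fun measurableSet_Ioi (fun r hr => hQeq ω r hr)]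
    refine (ofReal_integral_eq_lintegral_ofReal (hBint ω) ?_).symm
    filter_upwards [ae_restrict_mem measurableSet_Ioi] with r hr
    exact mul_nonneg (Real.rpow_nonneg (le_of_lt hr) _) (sq_nonneg _)
  -- main inequality in ENNReal
  have hmain : ENNReal.ofReal (c^2) * ∫⁻ x, ENNReal.ofReal (P x) ≤
      ENNReal.ofReal 4 * ∫⁻ x, ENNReal.ofReal (Q x) := by
    rw [hIP, hIQ, ← lintegral_const_mul' _ _ ENNReal.ofReal_ne_top,
      ← lintegral_const_mul' _ _ ENNReal.ofReal_ne_top]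
    refine lintegral_mono fun ω => ?_
    rw [← ENNReal.ofReal_mul (by positivity), ← ENNReal.ofReal_mul (by norm_num)]
    exact ENNReal.ofReal_le_ofReal (oneD hc (hgsm ω) (hgs ω))
  -- finiteness of the RHS
  obtain ⟨M, hM⟩ := (hsupp.fderiv ℝ).exists_bound_of_continuous (hu.continuous_fderiv (by simp))
  have hM0 : 0 ≤ M := le_trans (norm_nonneg _) (hM 0)
  have hgradbd : ∀ (ω : Metric.sphere (0 : EuclideanSpace ℝ (Fin N)) 1) (r : ℝ), |deriv (g ω) r| ≤ M := by
    intro ω r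
    rw [hderiv_g ω r]
    calc |⟪(ω : EuclideanSpace ℝ (Fin N)), gradient u (r • (ω : EuclideanSpace ℝ (Fin N)))⟫|
        ≤ ‖(ω : EuclideanSpace ℝ (Fin N))‖ *
          ‖gradient u (r • (ω : EuclideanSpace ℝ (Fin N)))‖ := abs_real_inner_le_norm _ _
      _ = ‖fderiv ℝ u (r • (ω : EuclideanSpace ℝ (Fin N)))‖ := by
          rw [mem_sphere_zero_iff_norm.mp ω.2, one_mul, gradient,
            LinearIsometryEquiv.norm_map]
      _ ≤ M := hM _
  set ψ : ℝ → ℝ := (Ioc (0:ℝ) R).indicator (fun r => r ^ (c+1) * M ^ 2) with hψdef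
  have hψint : IntegrableOn ψ (Ioi (0:ℝ)) := by
    have h0 : IntegrableOn (fun r : ℝ => r ^ (c+1) * M ^ 2) (Ioc 0 R) := by
      rw [IntegrableOn, ← Measure.restrict_congr_set Ioo_ae_eq_Ioc]
      exact ((intervalIntegral.integrableOn_Ioo_rpow_iff hR0).2
        (by rw [hcdef]; linarith : (-1:ℝ) < c + 1)).mul_const (M ^ 2)
    exact ((integrable_indicator_iff measurableSet_Ioc).2 h0).integrableOn
  have hBbd : ∀ ω, (∫ r in Ioi (0:ℝ), r ^ (c+1) * deriv (g ω) r ^ 2) ≤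
      ∫ r in Ioi (0:ℝ), ψ r := by
    intro ω
    refine setIntegral_mono_on (hBint ω) hψint measurableSet_Ioi ?_
    intro r hr
    have hr0 : (0:ℝ) < r := hr
    by_cases hrR : r ≤ R
    · rw [hψdef, Set.indicator_of_mem (show r ∈ Ioc (0:ℝ) R from ⟨hr0, hrR⟩) (fun r => r ^ (c+1) * M ^ 2)]
      have h1 : deriv (g ω) r ^ 2 ≤ M ^ 2 := by
        rw [← sq_abs]
        exact pow_le_pow_left₀ (abs_nonneg _) (hgradbd ω r) 2
      exact mul_le_mul_of_nonneg_left h1 (Real.rpow_nonneg hr0.le _)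
    · rw [hψdef, Set.indicator_of_notMem (fun h : r ∈ Ioc (0:ℝ) R => hrR h.2) (fun r => r ^ (c+1) * M ^ 2)]
      have hgz : gradient u (r • (ω : EuclideanSpace ℝ (Fin N))) = 0 := by
        have hnm : r • (ω : EuclideanSpace ℝ (Fin N)) ∉ tsupport u := by
          intro hmem
          have := hRsup hmem
          rw [Metric.mem_closedBall, dist_zero_right, hnorm ω r hr0.le] at this
          exact hrR this
        rw [gradient, fderiv_of_notMem_tsupport _ hnm]
        simp
      rw [hderiv_g ω r, hgz]
      simp
  have hIQfin : (∫⁻ x, ENNReal.ofReal (Q x)) ≠ ⊤ := by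
    rw [hIQ]
    refine ne_top_of_le_ne_top ?_ (lintegral_mono fun ω =>
      ENNReal.ofReal_le_ofReal (hBbd ω))
    rw [lintegral_const]
    exact ENNReal.mul_ne_top ENNReal.ofReal_ne_top (measure_ne_top _ _)
  have hIPfin : (∫⁻ x, ENNReal.ofReal (P x)) ≠ ⊤ := by
    intro htop
    rw [htop, ENNReal.mul_top (by
      rw [Ne, ENNReal.ofReal_eq_zero, not_le]
      positivity)] at hmain
    exact ENNReal.mul_ne_top ENNReal.ofReal_ne_top hIQfin (top_le_iff.mp hmain)
  have hreal : c^2 * (∫⁻ x, ENNReal.ofReal (P x)).toReal ≤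
      4 * (∫⁻ x, ENNReal.ofReal (Q x)).toReal := by
    have := ENNReal.toReal_mono (ENNReal.mul_ne_top ENNReal.ofReal_ne_top hIQfin) hmain
    rwa [ENNReal.toReal_mul, ENNReal.toReal_mul, ENNReal.toReal_ofReal (by positivity),
      ENNReal.toReal_ofReal (by norm_num)] at this
  -- conclusion
  rw [hΩP, hΩQ, hP, hQ]
  have h1 : c * Real.sqrt ((∫⁻ x, ENNReal.ofReal (P x)).toReal) =
      Real.sqrt (c^2 * (∫⁻ x, ENNReal.ofReal (P x)).toReal) := by
    rw [Real.sqrt_mul (sq_nonneg c), Real.sqrt_sq hc.le]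
  have h2 : 2 * Real.sqrt ((∫⁻ x, ENNReal.ofReal (Q x)).toReal) =
      Real.sqrt (4 * (∫⁻ x, ENNReal.ofReal (Q x)).toReal) := by
    rw [show (4:ℝ) = 2^2 by norm_num, Real.sqrt_mul (sq_nonneg 2),
      Real.sqrt_sq (by norm_num : (0:ℝ) ≤ 2)]
  rw [h1, h2]
  exact Real.sqrt_le_sqrt hreal
end

section
/- Let Ω ⊂ ℝ² be a domain whose complement contains the closed unit ball (so r > 1 on Ω). Then for all u ∈ C_c^∞(Ω): ‖u/(r ln r)‖_{L²(Ω)} ≤ 2 ‖∂_r u‖_{L²(Ω)} ≤ 2 ‖∇u‖_{L²(Ω)}. -/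
open MeasureTheory Real Set
open scoped RealInnerProductSpace
set_option maxHeartbeats 1600000


lemma aux_int_deriv (f : ℝ → ℝ) (hf : ContDiff ℝ 1 f) (h2 : HasCompactSupport f) :
    ∫ x, deriv f x = 0 := by
  have hint : Integrable (deriv f) := by
    exact ((hf.continuous_deriv le_rfl).integrable_of_hasCompactSupport h2.deriv)
  rw [← intervalIntegral.integral_Iic_add_Ioi (b := 0) (μ := volume) hint.integrableOn hint.integrableOn,
    h2.integral_Iic_deriv_eq hf, h2.integral_Ioi_deriv_eq hf]
  ring

lemma aux_fderiv_zero {E F : Type*} [NormedAddCommGroup E] [NormedSpace ℝ E]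
    [NormedAddCommGroup F] [NormedSpace ℝ F] {f : E → F} {p : E}
    (hp : p ∉ tsupport f) : fderiv ℝ f p = 0 := by
  by_contra h
  exact hp (support_fderiv_subset ℝ (by simpa [Function.mem_support] using h))

lemma aux_prod_snd (F : ℝ × ℝ → ℝ) (hF : ContDiff ℝ 1 F) (h2 : HasCompactSupport F) :
    ∫ p : ℝ × ℝ, fderiv ℝ F p (0, 1) = 0 := by
  have hcont : Continuous fun p : ℝ × ℝ => fderiv ℝ F p (0, 1) :=
    (hF.continuous_fderiv one_ne_zero).clm_apply continuous_const
  have hsupp : HasCompactSupport fun p : ℝ × ℝ => fderiv ℝ F p (0, 1) :=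
    HasCompactSupport.intro h2 fun p hp => by rw [aux_fderiv_zero hp]; rfl
  have hint : Integrable fun p : ℝ × ℝ => fderiv ℝ F p (0, 1) :=
    hcont.integrable_of_hasCompactSupport hsupp
  rw [MeasureTheory.Measure.volume_eq_prod] at hint ⊢
  rw [integral_prod _ hint]
  have key : ∀ x : ℝ, ∫ y : ℝ, fderiv ℝ F (x, y) (0, 1) = 0 := by
    intro x
    have hfx : ContDiff ℝ 1 (fun y => F (x, y)) := hF.comp (contDiff_const.prodMk contDiff_id)
    have hfxs : HasCompactSupport fun y => F (x, y) := by
      refine HasCompactSupport.intro (h2.image continuous_snd) fun y hy => ?_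
      by_contra h
      exact hy ⟨(x, y), subset_tsupport _ h, rfl⟩
    have hder : ∀ y : ℝ, deriv (fun y => F (x, y)) y = fderiv ℝ F (x, y) (0, 1) := by
      intro y
      exact (((hF.differentiable one_ne_zero (x, y)).hasFDerivAt.comp_hasDerivAt y
        ((hasDerivAt_const y x).prodMk (hasDerivAt_id y)))).deriv
    rw [show (fun y => fderiv ℝ F (x, y) (0,1)) = fun y => deriv (fun y => F (x, y)) y from
      funext fun y => (hder y).symm]
    exact aux_int_deriv _ hfx hfxs
  simp [key]

lemma aux_prod_fst (F : ℝ × ℝ → ℝ) (hF : ContDiff ℝ 1 F) (h2 : HasCompactSupport F) :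
    ∫ p : ℝ × ℝ, fderiv ℝ F p (1, 0) = 0 := by
  -- F' := F ∘ Prod.swap
  set L : (ℝ × ℝ) →L[ℝ] (ℝ × ℝ) :=
    (ContinuousLinearMap.snd ℝ ℝ ℝ).prod (ContinuousLinearMap.fst ℝ ℝ ℝ) with hL
  have hswap : ∀ p : ℝ × ℝ, L p = p.swap := fun p => rfl
  have hF' : ContDiff ℝ 1 (fun p : ℝ × ℝ => F (L p)) := hF.comp L.contDiff
  have h2' : HasCompactSupport fun p : ℝ × ℝ => F (L p) := by
    refine HasCompactSupport.intro (h2.image continuous_swap) fun p hp => ?_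
    by_contra h
    exact hp ⟨L p, subset_tsupport _ h, rfl⟩
  have key : ∀ p : ℝ × ℝ, fderiv ℝ (fun p => F (L p)) p (0, 1) = fderiv ℝ F (L p) (1, 0) := by
    intro p
    have : HasFDerivAt (fun p => F (L p)) ((fderiv ℝ F (L p)).comp L) p :=
      (hF.differentiable one_ne_zero (L p)).hasFDerivAt.comp p L.hasFDerivAt
    rw [this.fderiv]; rfl
  have := aux_prod_snd _ hF' h2'
  rw [show (fun p : ℝ × ℝ => fderiv ℝ (fun p => F (L p)) p (0,1))
      = fun p : ℝ × ℝ => fderiv ℝ F p.swap (1, 0) from funext fun p => by rw [key p, hswap]] at this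
  rw [MeasureTheory.Measure.volume_eq_prod] at this ⊢
  rwa [integral_prod_swap (fun p : ℝ × ℝ => fderiv ℝ F p (1,0))] at this

lemma aux_euclid (f : EuclideanSpace ℝ (Fin 2) → ℝ) (hf : ContDiff ℝ 1 f)
    (h2 : HasCompactSupport f) (i : Fin 2) :
    ∫ x, fderiv ℝ f x (EuclideanSpace.single i 1) = 0 := by
  -- the continuous linear map ℝ × ℝ → EuclideanSpace ℝ (Fin 2)
  set L : (ℝ × ℝ) →L[ℝ] EuclideanSpace ℝ (Fin 2) :=
    ((PiLp.continuousLinearEquiv 2 ℝ (fun _ : Fin 2 => ℝ)).symm : (Fin 2 → ℝ) →L[ℝ] _).comp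
      (ContinuousLinearMap.pi
        (fun j : Fin 2 => if j = 0 then ContinuousLinearMap.fst ℝ ℝ ℝ else ContinuousLinearMap.snd ℝ ℝ ℝ)) with hLdef
  have hLcoord : ∀ (p : ℝ × ℝ) (j : Fin 2), L p j = if j = 0 then p.1 else p.2 := by
    intro p j
    fin_cases j <;> rfl
  -- measure preserving equivalence
  have mp : MeasurePreserving (⇑L) volume volume := by
    have m1 : MeasurePreserving (MeasurableEquiv.toLp 2 (Fin 2 → ℝ)) volume volume :=
      (EuclideanSpace.volume_preserving_symm_measurableEquiv_toLp (Fin 2)).symm _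
    have m2 : MeasurePreserving (MeasurableEquiv.piFinTwo (fun _ : Fin 2 => ℝ)).symm volume volume :=
      (volume_preserving_piFinTwo (fun _ : Fin 2 => ℝ)).symm _
    have := m1.comp m2
    convert this using 1
    funext p
    show L p = (MeasurableEquiv.toLp 2 (Fin 2 → ℝ))
      ((MeasurableEquiv.piFinTwo (fun _ : Fin 2 => ℝ)).symm p)
    refine PiLp.ext fun j => ?_
    fin_cases j <;> rfl
  have emb : MeasurableEmbedding (⇑L) := by
    have heq : ⇑L = ⇑(MeasurableEquiv.toLp 2 (Fin 2 → ℝ)) ∘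
        ⇑(MeasurableEquiv.piFinTwo (fun _ : Fin 2 => ℝ)).symm := by
      funext p
      refine PiLp.ext fun j => ?_
      fin_cases j <;> rfl
    rw [heq]
    exact ((MeasurableEquiv.toLp 2 (Fin 2 → ℝ)).measurableEmbedding).comp
      ((MeasurableEquiv.piFinTwo (fun _ : Fin 2 => ℝ)).symm.measurableEmbedding)
  have hF' : ContDiff ℝ 1 (fun p : ℝ × ℝ => f (L p)) := hf.comp L.contDiff
  have h2' : HasCompactSupport fun p : ℝ × ℝ => f (L p) := by
    refine HasCompactSupport.intro (h2.image (by fun_prop : Continuous fun x :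
        EuclideanSpace ℝ (Fin 2) => ((x 0 : ℝ), (x 1 : ℝ)))) fun p hp => ?_
    by_contra h
    refine hp ⟨L p, subset_tsupport _ h, ?_⟩
    have h0 : L p 0 = p.1 := rfl
    have h1 : L p 1 = p.2 := rfl
    show (L p 0, L p 1) = p
    rw [h0, h1]
  have key : ∀ (p : ℝ × ℝ) (v : ℝ × ℝ),
      fderiv ℝ (fun p => f (L p)) p v = fderiv ℝ f (L p) (L v) := by
    intro p v
    have : HasFDerivAt (fun p => f (L p)) ((fderiv ℝ f (L p)).comp L) p :=
      (hf.differentiable one_ne_zero (L p)).hasFDerivAt.comp p L.hasFDerivAt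
    rw [this.fderiv]; rfl
  rw [← mp.integral_comp emb (fun x => fderiv ℝ f x (EuclideanSpace.single i 1))]
  fin_cases i
  · show (∫ p : ℝ × ℝ, fderiv ℝ f (L p) (EuclideanSpace.single (0 : Fin 2) (1:ℝ))) = 0
    have hv : (EuclideanSpace.single (0 : Fin 2) (1:ℝ)) = L (1, 0) := by
      refine PiLp.ext fun j => ?_
      fin_cases j <;> simp [hLcoord, EuclideanSpace.single_apply]
    rw [show (fun p : ℝ × ℝ => fderiv ℝ f (L p) (EuclideanSpace.single (0 : Fin 2) (1:ℝ)))
        = fun p : ℝ × ℝ => fderiv ℝ (fun p => f (L p)) p (1, 0) from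
      funext fun p => by rw [key p (1,0), hv]]
    exact aux_prod_fst _ hF' h2'
  · show (∫ p : ℝ × ℝ, fderiv ℝ f (L p) (EuclideanSpace.single (1 : Fin 2) (1:ℝ))) = 0
    have hv : (EuclideanSpace.single (1 : Fin 2) (1:ℝ)) = L (0, 1) := by
      refine PiLp.ext fun j => ?_
      fin_cases j <;> simp [hLcoord, EuclideanSpace.single_apply]
    rw [show (fun p : ℝ × ℝ => fderiv ℝ f (L p) (EuclideanSpace.single (1 : Fin 2) (1:ℝ)))
        = fun p : ℝ × ℝ => fderiv ℝ (fun p => f (L p)) p (0, 1) from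
      funext fun p => by rw [key p (0,1), hv]]
    exact aux_prod_snd _ hF' h2'

noncomputable abbrev E2 := EuclideanSpace ℝ (Fin 2)

-- generic linear evaluation lemma
lemma aux_decomp (x : E2) (T : E2 →L[ℝ] ℝ) :
    x 0 * T (EuclideanSpace.single 0 1) + x 1 * T (EuclideanSpace.single 1 1) = T x := by
  have hx : (x 0) • EuclideanSpace.single (0:Fin 2) (1:ℝ)
      + (x 1) • EuclideanSpace.single (1:Fin 2) (1:ℝ) = x := by
    refine PiLp.ext fun j => ?_
    fin_cases j <;>
      simp [EuclideanSpace.single_apply]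
  conv_rhs => rw [← hx]
  rw [map_add, _root_.map_smul, _root_.map_smul]
  simp [smul_eq_mul]

lemma aux_div2 (f0 f1 : E2 → ℝ) (hc0 : ContDiff ℝ 1 f0) (hs0 : HasCompactSupport f0)
    (hc1 : ContDiff ℝ 1 f1) (hs1 : HasCompactSupport f1) :
    ∫ x, (fderiv ℝ f0 x (EuclideanSpace.single 0 1)
      + fderiv ℝ f1 x (EuclideanSpace.single 1 1)) = 0 := by
  have int0 : Integrable fun x => fderiv ℝ f0 x (EuclideanSpace.single 0 1) :=
    ((hc0.continuous_fderiv one_ne_zero).clm_apply continuous_const).integrable_of_hasCompactSupport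
      (HasCompactSupport.intro hs0 fun p hp => by rw [aux_fderiv_zero hp]; rfl)
  have int1 : Integrable fun x => fderiv ℝ f1 x (EuclideanSpace.single 1 1) :=
    ((hc1.continuous_fderiv one_ne_zero).clm_apply continuous_const).integrable_of_hasCompactSupport
      (HasCompactSupport.intro hs1 fun p hp => by rw [aux_fderiv_zero hp]; rfl)
  rw [integral_add int0 int1, aux_euclid _ hc0 hs0 0, aux_euclid _ hc1 hs1 1]
  ring

/-- Corollary A.1(ii). `Ω ⊂ ℝ²` a domain with the closed unit ball
contained in the complement. For `u ∈ C_c^∞(Ω)`: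
`‖u/(r ln r)‖ ≤ 2 ‖∂_r u‖ ≤ 2 ‖∇u‖` in `L²(Ω)`. -/
theorem poincare_log_dim_two
    (Ω : Set (EuclideanSpace ℝ (Fin 2))) (hΩ : IsOpen Ω)
    (hball : Metric.closedBall (0 : EuclideanSpace ℝ (Fin 2)) 1 ⊆ Ωᶜ)
    (u : EuclideanSpace ℝ (Fin 2) → ℝ)
    (hu : ContDiff ℝ (⊤ : ℕ∞) u) (hsupp : HasCompactSupport u) (hsuppΩ : tsupport u ⊆ Ω) :
    Real.sqrt (∫ x in Ω, (u x / (‖x‖ * Real.log ‖x‖)) ^ 2) ≤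
        2 * Real.sqrt (∫ x in Ω,
          (⟪(‖x‖⁻¹ • x : EuclideanSpace ℝ (Fin 2)), gradient u x⟫) ^ 2) ∧
      2 * Real.sqrt (∫ x in Ω,
          (⟪(‖x‖⁻¹ • x : EuclideanSpace ℝ (Fin 2)), gradient u x⟫) ^ 2) ≤
        2 * Real.sqrt (∫ x in Ω, ‖gradient u x‖ ^ 2) := by
  set d : E2 → ℝ := fun x => u x / (‖x‖ * Real.log ‖x‖) with hd_def
  set v : E2 → ℝ := fun x => ⟪(‖x‖⁻¹ • x : E2), gradient u x⟫ with hv_def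
  set h : E2 → ℝ := fun y => ‖y‖ ^ 2 * Real.log (‖y‖ ^ 2) with hh_def
  set s : E2 → ℝ := fun y => 2 * (u y * u y * (h y)⁻¹) with hs_def
  set f : Fin 2 → E2 → ℝ := fun i y => s y * y i with hf_def
  -- basic facts
  have hΩ1 : ∀ x ∈ Ω, 1 < ‖x‖ := by
    intro x hx
    by_contra hle
    exact hball (Metric.mem_closedBall.mpr (by simpa using not_lt.mp hle)) hx
  have huts : ∀ x ∉ tsupport u, u x = 0 := fun x hx => image_eq_zero_of_notMem_tsupport hx
  have hts1 : ∀ x ∈ tsupport u, 1 < ‖x‖ := fun x hx => hΩ1 x (hsuppΩ hx)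
  have hgrad0 : ∀ x ∉ tsupport u, gradient u x = 0 := by
    intro x hx
    show (InnerProductSpace.toDual ℝ E2).symm (fderiv ℝ u x) = 0
    rw [aux_fderiv_zero hx, map_zero]
  have hinner : ∀ (x w : E2), ⟪w, gradient u x⟫ = fderiv ℝ u x w := by
    intro x w
    rw [real_inner_comm]
    exact InnerProductSpace.toDual_symm_apply
  have hgradcont : Continuous fun x => gradient u x := by
    show Continuous fun x => (InnerProductSpace.toDual ℝ E2).symm (fderiv ℝ u x)
    exact (InnerProductSpace.toDual ℝ E2).symm.continuous.comp (hu.continuous_fderiv (by simp))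
  -- positivity facts on the support
  have hq1 : ∀ x ∈ tsupport u, (1:ℝ) < ‖x‖ ^ 2 := fun x hx => by nlinarith [hts1 x hx]
  have hhpos : ∀ x ∈ tsupport u, 0 < h x := fun x hx =>
    mul_pos (by nlinarith [hq1 x hx]) (Real.log_pos (hq1 x hx))
  -- continuity
  have hd_cont : Continuous d := by
    rw [continuous_iff_continuousAt]
    intro x
    by_cases hx : x ∈ tsupport u
    · have h1 : 1 < ‖x‖ := hts1 x hx
      have hne : ‖x‖ * Real.log ‖x‖ ≠ 0 :=
        ne_of_gt (mul_pos (by linarith) (Real.log_pos h1))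
      exact (hu.continuous.continuousAt).div
        (continuous_norm.continuousAt.mul ((Real.continuousAt_log (by linarith)).comp
          continuous_norm.continuousAt)) hne
    · have hev : d =ᶠ[nhds x] fun _ => 0 := by
        filter_upwards [(isClosed_tsupport u).isOpen_compl.mem_nhds hx] with y hy
        simp [hd_def, huts y hy]
      exact (continuousAt_congr hev).mpr continuousAt_const
  have hv_cont : Continuous v := by
    rw [continuous_iff_continuousAt]
    intro x
    by_cases hx : x ∈ tsupport u
    · have h1 : 1 < ‖x‖ := hts1 x hx
      have hne : ‖x‖ ≠ 0 := by intro hc; rw [hc] at h1; linarith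
      exact ContinuousAt.inner
        ((continuous_norm.continuousAt.inv₀ hne).smul continuousAt_id)
        hgradcont.continuousAt
    · have hev : v =ᶠ[nhds x] fun _ => 0 := by
        filter_upwards [(isClosed_tsupport u).isOpen_compl.mem_nhds hx] with y hy
        simp only [hv_def, hgrad0 y hy, inner_zero_right]
      exact (continuousAt_congr hev).mpr continuousAt_const
  -- smoothness and support of the vector field components
  have hfC : ∀ i, ContDiff ℝ 1 (f i) := by
    intro i
    rw [contDiff_iff_contDiffAt]
    intro x
    by_cases hx : x ∈ tsupport u
    · have hq : ContDiffAt ℝ 1 (fun y : E2 => ‖y‖ ^ 2) x := (contDiff_norm_sq (𝕜 := ℝ) (E := E2)).contDiffAt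
      have hlog : ContDiffAt ℝ 1 (fun y : E2 => Real.log (‖y‖ ^ 2)) x :=
        (Real.contDiffAt_log.mpr (by nlinarith [hq1 x hx])).comp x hq
      have hhC : ContDiffAt ℝ 1 h x := hq.mul hlog
      have hinvC : ContDiffAt ℝ 1 (fun y => (h y)⁻¹) x := hhC.inv (ne_of_gt (hhpos x hx))
      have hC : ContDiffAt ℝ 1 u x := (hu.of_le (by simp)).contDiffAt
      have hproji : ContDiffAt ℝ 1 (fun y : E2 => y i) x :=
        (contDiff_euclidean.mp contDiff_id i).contDiffAt
      exact (contDiffAt_const.mul ((hC.mul hC).mul hinvC)).mul hproji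
    · have hev : f i =ᶠ[nhds x] fun _ => (0:ℝ) := by
        filter_upwards [(isClosed_tsupport u).isOpen_compl.mem_nhds hx] with y hy
        simp [hf_def, hs_def, huts y hy]
      exact contDiffAt_const.congr_of_eventuallyEq hev
  have hfS : ∀ i, HasCompactSupport (f i) := by
    intro i
    refine HasCompactSupport.intro hsupp fun x hx => ?_
    simp [hf_def, hs_def, huts x hx]
  -- pointwise divergence identity
  have hdiv : ∀ x, fderiv ℝ (f 0) x (EuclideanSpace.single 0 1)
      + fderiv ℝ (f 1) x (EuclideanSpace.single 1 1) = 2 * d x * v x - d x ^ 2 := by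
    intro x
    by_cases hx : x ∈ tsupport u
    · -- the interesting case
      have hr : 1 < ‖x‖ := hts1 x hx
      have hrpos : (0:ℝ) < ‖x‖ := by linarith
      have hr0 : ‖x‖ ≠ 0 := ne_of_gt hrpos
      have hq1' : (1:ℝ) < ‖x‖ ^ 2 := hq1 x hx
      have hqpos : (0:ℝ) < ‖x‖ ^ 2 := by linarith
      have hLq : (0:ℝ) < Real.log (‖x‖ ^ 2) := Real.log_pos hq1'
      have hl0 : Real.log ‖x‖ ≠ 0 := ne_of_gt (Real.log_pos hr)
      have hhx : (0:ℝ) < h x := hhpos x hx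
      have hqD : HasFDerivAt (fun y : E2 => ‖y‖ ^ 2) ((2:ℕ) • (innerSL ℝ x)) x := by
        simpa using (hasFDerivAt_id x).norm_sq
      have hLD : HasFDerivAt (fun y : E2 => Real.log (‖y‖ ^ 2))
          ((‖x‖ ^ 2)⁻¹ • ((2:ℕ) • (innerSL ℝ x))) x :=
        by have := (Real.hasDerivAt_log (ne_of_gt hqpos)).comp_hasFDerivAt x hqD; exact this
      have hhD : HasFDerivAt h
          ((‖x‖ ^ 2) • ((‖x‖ ^ 2)⁻¹ • ((2:ℕ) • (innerSL ℝ x)))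
            + Real.log (‖x‖ ^ 2) • ((2:ℕ) • (innerSL ℝ x))) x := hqD.mul hLD
      have hiD : HasFDerivAt (fun y => (h y)⁻¹)
          ((-(h x ^ 2)⁻¹) • ((‖x‖ ^ 2) • ((‖x‖ ^ 2)⁻¹ • ((2:ℕ) • (innerSL ℝ x)))
            + Real.log (‖x‖ ^ 2) • ((2:ℕ) • (innerSL ℝ x)))) x :=
        (hasDerivAt_inv (ne_of_gt hhx)).comp_hasFDerivAt x hhD
      have huD : HasFDerivAt u (fderiv ℝ u x) x := (hu.differentiable (by simp) x).hasFDerivAt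
      obtain ⟨DS, hsD, hDSx⟩ : ∃ D : E2 →L[ℝ] ℝ, HasFDerivAt s D x ∧
          D x = 2 * ((u x * u x) * (-(h x ^ 2)⁻¹
              * (‖x‖ ^ 2 * ((‖x‖ ^ 2)⁻¹ * (2 * ‖x‖ ^ 2))
                + Real.log (‖x‖ ^ 2) * (2 * ‖x‖ ^ 2)))
            + (h x)⁻¹ * (u x * fderiv ℝ u x x + u x * fderiv ℝ u x x)) := by
        refine ⟨_, ((huD.mul huD).mul hiD).const_mul 2, ?_⟩
        simp only [ContinuousLinearMap.add_apply, ContinuousLinearMap.smul_apply,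
          smul_eq_mul, innerSL_apply_apply, real_inner_self_eq_norm_sq, nsmul_eq_mul, Pi.mul_apply]
        push_cast
        ring
      have hpD : ∀ i : Fin 2, HasFDerivAt (fun y : E2 => y i)
          (EuclideanSpace.proj i : E2 →L[ℝ] ℝ) x :=
        fun i => by exact (EuclideanSpace.proj (𝕜 := ℝ) i).hasFDerivAt
      have hval : ∀ i : Fin 2, fderiv ℝ (fun y : E2 => s y * y i) x (EuclideanSpace.single i 1)
          = s x + x i * DS (EuclideanSpace.single i 1) := by
        intro i
        rw [(hsD.fun_mul (hpD i)).fderiv]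
        simp [ContinuousLinearMap.add_apply, ContinuousLinearMap.smul_apply, smul_eq_mul,
          EuclideanSpace.single_apply]
      have hI : v x = ‖x‖⁻¹ * fderiv ℝ u x x := by
        simp only [hv_def]
        rw [real_inner_smul_left, hinner]
      have final : 2 * s x + DS x = 2 * d x * v x - d x ^ 2 := by
        rw [hDSx, hI]
        simp only [hs_def, hd_def, hh_def]
        rw [Real.log_pow]
        push_cast
        field_simp
        ring
      simp only [hf_def]
      rw [hval 0, hval 1]
      linear_combination final + aux_decomp x DS
    · have h0 : ∀ i : Fin 2, fderiv ℝ (f i) x = 0 := by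
        intro i
        have hev : f i =ᶠ[nhds x] fun _ => (0:ℝ) := by
          filter_upwards [(isClosed_tsupport u).isOpen_compl.mem_nhds hx] with y hy
          simp [hf_def, hs_def, huts y hy]
        rw [hev.fderiv_eq]
        exact fderiv_const_apply 0
      simp [h0, hd_def, huts x hx]
  -- integrability
  have hd_supp : HasCompactSupport d := by
    refine HasCompactSupport.intro hsupp fun x hx => ?_
    simp [hd_def, huts x hx]
  have hv_supp : HasCompactSupport v := by
    refine HasCompactSupport.intro hsupp fun x hx => ?_
    simp only [hv_def, hgrad0 x hx, inner_zero_right]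
  have ha_int : Integrable (fun x => d x ^ 2) :=
    (hd_cont.pow 2).integrable_of_hasCompactSupport
      (by have := hd_supp.comp_left (g := (· ^ 2)) (by simp); exact this)
  have hv2_int : Integrable (fun x => v x ^ 2) :=
    (hv_cont.pow 2).integrable_of_hasCompactSupport
      (by have := hv_supp.comp_left (g := (· ^ 2)) (by simp); exact this)
  have hP_int : Integrable (fun x => 2 * d x * v x) :=
    ((continuous_const.mul hd_cont).mul hv_cont).integrable_of_hasCompactSupport
      ((hd_supp.mul_left.mul_right))
  have hg2_int : Integrable (fun x => ‖gradient u x‖ ^ 2) :=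
    ((hgradcont.norm.pow 2)).integrable_of_hasCompactSupport
      (by have := (((HasCompactSupport.intro hsupp fun x hx => hgrad0 x hx : HasCompactSupport
        (fun x => gradient u x)).norm).comp_left (g := (· ^ 2)) (by simp)); exact this)
  -- the divergence theorem step
  have hPA : ∫ x, (2 * d x * v x - d x ^ 2) = 0 := by
    rw [show (fun x => 2 * d x * v x - d x ^ 2)
        = fun x => fderiv ℝ (f 0) x (EuclideanSpace.single 0 1)
          + fderiv ℝ (f 1) x (EuclideanSpace.single 1 1) from
      funext fun x => (hdiv x).symm]
    exact aux_div2 _ _ (hfC 0) (hfS 0) (hfC 1) (hfS 1)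
  have hIA : ∫ x, d x ^ 2 = ∫ x, 2 * d x * v x := by
    have := integral_sub hP_int ha_int
    rw [hPA] at this
    linarith [this.symm]
  have hAB : ∫ x, d x ^ 2 ≤ 4 * ∫ x, v x ^ 2 := by
    have hmono : ∫ x, 2 * d x * v x ≤ ∫ x, ((1/2) * d x ^ 2 + 2 * v x ^ 2) := by
      refine integral_mono hP_int ((ha_int.const_mul _).add (hv2_int.const_mul _)) fun x => ?_
      nlinarith [sq_nonneg (d x - 2 * v x)]
    rw [integral_add (ha_int.const_mul _) (hv2_int.const_mul _),
      integral_const_mul, integral_const_mul] at hmono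
    linarith [hIA]
  -- set integrals to full integrals
  have ea : ∫ x in Ω, (u x / (‖x‖ * Real.log ‖x‖)) ^ 2 = ∫ x, d x ^ 2 := by
    refine setIntegral_eq_integral_of_forall_compl_eq_zero fun x hx => ?_
    have : x ∉ tsupport u := fun hc => hx (hsuppΩ hc)
    simp [huts x this]
  have ev : ∫ x in Ω, (⟪(‖x‖⁻¹ • x : E2), gradient u x⟫) ^ 2 = ∫ x, v x ^ 2 := by
    refine setIntegral_eq_integral_of_forall_compl_eq_zero fun x hx => ?_
    have : x ∉ tsupport u := fun hc => hx (hsuppΩ hc)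
    simp [hgrad0 x this]
  have eg : ∫ x in Ω, ‖gradient u x‖ ^ 2 = ∫ x, ‖gradient u x‖ ^ 2 := by
    refine setIntegral_eq_integral_of_forall_compl_eq_zero fun x hx => ?_
    have : x ∉ tsupport u := fun hc => hx (hsuppΩ hc)
    simp [hgrad0 x this]
  have hv2nn : (0:ℝ) ≤ ∫ x, v x ^ 2 := integral_nonneg fun x => sq_nonneg _
  have sqrt4 : Real.sqrt 4 = 2 := by
    rw [show (4:ℝ) = 2 ^ 2 by norm_num, Real.sqrt_sq (by norm_num : (0:ℝ) ≤ 2)]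
  constructor
  · rw [ea, ev]
    calc Real.sqrt (∫ x, d x ^ 2) ≤ Real.sqrt (4 * ∫ x, v x ^ 2) := Real.sqrt_le_sqrt hAB
      _ = 2 * Real.sqrt (∫ x, v x ^ 2) := by
          rw [Real.sqrt_mul (by norm_num : (0:ℝ) ≤ 4), sqrt4]
  · rw [ev, eg]
    have hpt : ∀ x, v x ^ 2 ≤ ‖gradient u x‖ ^ 2 := by
      intro x
      have h1 : |v x| ≤ ‖gradient u x‖ := by
        calc |v x| ≤ ‖(‖x‖⁻¹ • x : E2)‖ * ‖gradient u x‖ := abs_real_inner_le_norm _ _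
          _ ≤ 1 * ‖gradient u x‖ := by
              refine mul_le_mul_of_nonneg_right ?_ (norm_nonneg _)
              rw [norm_smul, norm_inv, norm_norm]
              rcases eq_or_ne x 0 with rfl | hx0
              · simp
              · rw [inv_mul_cancel₀ (norm_ne_zero_iff.mpr hx0)]
          _ = ‖gradient u x‖ := one_mul _
      calc v x ^ 2 = |v x| ^ 2 := (sq_abs _).symm
        _ ≤ ‖gradient u x‖ ^ 2 := pow_le_pow_left₀ (abs_nonneg _) h1 2
    refine mul_le_mul_of_nonneg_left (Real.sqrt_le_sqrt ?_) (by norm_num)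
    exact integral_mono hv2_int hg2_int hpt
end

section
/- Let u ∈ C_c^∞(ℝ) and β ∈ ℝ. Then |2β - 1| · ‖(1+|t|)^{β-1} u‖_{L²(ℝ)} ≤ 2 ‖(1+|t|)^β u'·sgn(t)‖_{L²(ℝ)} + |2 min{0, 2β-1}|^{1/2} |u(0)| ≤ 2 ‖(1+|t|)^β u'‖_{L²(ℝ)} + |2 min{0, 2β-1}|^{1/2} |u(0)|. -/
open MeasureTheory Real
open Set Filter

private lemma weight_cont (p : ℝ) : Continuous (fun t : ℝ => (1 + |t|) ^ p) :=
  (continuous_const.add continuous_abs).rpow_const (fun t => Or.inl (by positivity : (1:ℝ) + |t| ≠ 0))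

/-- Integration by parts on `(0, ∞)`. -/
private lemma ibp_half (u : ℝ → ℝ) (hu : ContDiff ℝ (⊤ : ℕ∞) u) (hsupp : HasCompactSupport u)
    (β : ℝ) :
    ∫ t in Ioi (0:ℝ),
      ((2*β-1) * ((1+|t|) ^ (β-1) * u t)^2
        + 2 * ((1+|t|) ^ β * deriv u t * ((1+|t|) ^ (β-1) * u t))) = -(u 0)^2 := by
  have hdiff : Differentiable ℝ u := hu.differentiable (by simp)
  have cu : Continuous u := hu.continuous
  have cu' : Continuous (deriv u) := hu.continuous_deriv (by simp)
  -- integrability of the integrand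
  have hGc : Continuous (fun t : ℝ => (1+|t|) ^ (β-1) * u t) := (weight_cont (β-1)).mul cu
  have hFc : Continuous (fun t : ℝ => (1+|t|) ^ β * deriv u t) := (weight_cont β).mul cu'
  have hGs : HasCompactSupport (fun t : ℝ => (1+|t|) ^ (β-1) * u t) := hsupp.mul_left
  have hFs : HasCompactSupport (fun t : ℝ => (1+|t|) ^ β * deriv u t) := hsupp.deriv.mul_left
  have hDint : Integrable (fun t : ℝ =>
      (2*β-1) * ((1+|t|) ^ (β-1) * u t)^2
        + 2 * ((1+|t|) ^ β * deriv u t * ((1+|t|) ^ (β-1) * u t))) := by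
    have h1 : Integrable (fun t : ℝ => ((1+|t|) ^ (β-1) * u t)^2) :=
      ((hGc.pow 2).integrable_of_hasCompactSupport
        (by have := hGs.comp_left (g := fun x : ℝ => x ^ 2) (by simp); exact this))
    have h2 : Integrable (fun t : ℝ => (1+|t|) ^ β * deriv u t * ((1+|t|) ^ (β-1) * u t)) :=
      ((hFc.mul hGc).integrable_of_hasCompactSupport (hFs.mul_right))
    exact (h1.const_mul _).add (h2.const_mul _)
  have key := integral_Ioi_of_hasDerivAt_of_tendsto
    (f := fun t : ℝ => (1+t) ^ (2*β-1) * u t ^ 2)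
    (f' := fun t : ℝ =>
      (2*β-1) * ((1+|t|) ^ (β-1) * u t)^2
        + 2 * ((1+|t|) ^ β * deriv u t * ((1+|t|) ^ (β-1) * u t)))
    (a := 0) (m := 0) ?_ ?_ hDint.integrableOn ?_
  · rw [key]
    norm_num
  · -- continuity at 0 from the right
    have h1 : ContinuousAt (fun t : ℝ => (1+t) ^ (2*β-1)) 0 := by
      have : ContinuousAt (fun t : ℝ => 1 + t) 0 := (continuous_const.add continuous_id).continuousAt
      exact this.rpow_const (Or.inl (by norm_num))
    exact (h1.mul (cu.continuousAt.pow 2)).continuousWithinAt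
  · intro x hx
    have hx0 : (0:ℝ) < x := hx
    have h1x : (0:ℝ) < 1 + x := by linarith
    have h1 : HasDerivAt (fun t : ℝ => 1 + t) 1 x := by
      simpa using (hasDerivAt_id x).const_add (1:ℝ)
    have h2 : HasDerivAt (fun t : ℝ => (1+t) ^ (2*β-1))
        ((2*β-1) * (1+x) ^ (2*β-1-1) * 1) x :=
      (Real.hasDerivAt_rpow_const (p := 2*β-1) (Or.inl h1x.ne')).comp x h1
    have h3 : HasDerivAt (fun t : ℝ => u t ^ 2) (2 * u x ^ 1 * deriv u x) x := by
      simpa [Function.comp_def, Pi.pow_def] using ((hdiff x).hasDerivAt).pow 2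
    have h4 : HasDerivAt (fun t : ℝ => (1+t) ^ (2*β-1) * u t ^ 2) _ x := h2.mul h3
    refine h4.congr_deriv (Eq.symm ?_)
    have hax : |x| = x := abs_of_pos hx0
    simp only [hax]
    have e1 : ((1+x) ^ (β-1)) ^ 2 = (1+x) ^ (2*β-1-1) := by
      rw [← Real.rpow_natCast ((1+x) ^ (β-1)) 2, ← Real.rpow_mul h1x.le]
      norm_num; ring_nf
    have e2 : (1+x) ^ β * (1+x) ^ (β-1) = (1+x) ^ (2*β-1) := by
      rw [← Real.rpow_add h1x]; ring_nf
    linear_combination ((2*β-1) * u x ^ 2) * e1 + (2 * u x * deriv u x) * e2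
  · -- tendsto 0 at top
    have hev : ∀ᶠ t in atTop, u t = 0 := by
      have h := hsupp
      rw [hasCompactSupport_iff_eventuallyEq, Filter.coclosedCompact_eq_cocompact] at h
      exact h.filter_mono _root_.atTop_le_cocompact
    have hev2 : (fun t : ℝ => (1+t) ^ (2*β-1) * u t ^ 2) =ᶠ[atTop] (fun _ => (0:ℝ)) := by
      filter_upwards [hev] with t ht; simp [ht]
    exact Tendsto.congr' hev2.symm tendsto_const_nhds

/-- Lemma A.1(iii). For `u ∈ C_c^∞(ℝ)` and `β ∈ ℝ`:
`|2β-1| ‖(1+|t|)^{β-1} u‖ ≤ 2 ‖(1+|t|)^β u' sgn(t)‖ + |2 min{0,2β-1}|^{1/2} |u 0|`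
and the middle term is bounded by the same expression with `u'` in place of `u' sgn`. -/
theorem poincare_one_dim (u : ℝ → ℝ) (hu : ContDiff ℝ (⊤ : ℕ∞) u) (hsupp : HasCompactSupport u)
    (β : ℝ) :
    |2 * β - 1| * Real.sqrt (∫ t, ((1 + |t|) ^ (β - 1) * u t) ^ 2) ≤
        2 * Real.sqrt (∫ t, ((1 + |t|) ^ β * deriv u t * Real.sign t) ^ 2) +
          Real.sqrt |2 * min 0 (2 * β - 1)| * |u 0| ∧
      2 * Real.sqrt (∫ t, ((1 + |t|) ^ β * deriv u t * Real.sign t) ^ 2) +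
          Real.sqrt |2 * min 0 (2 * β - 1)| * |u 0| ≤
        2 * Real.sqrt (∫ t, ((1 + |t|) ^ β * deriv u t) ^ 2) +
          Real.sqrt |2 * min 0 (2 * β - 1)| * |u 0| := by
  have hdiff : Differentiable ℝ u := hu.differentiable (by simp)
  have cu : Continuous u := hu.continuous
  have cu' : Continuous (deriv u) := hu.continuous_deriv (by simp)
  have hGc : Continuous (fun t : ℝ => (1+|t|) ^ (β-1) * u t) := (weight_cont _).mul cu
  have hFc : Continuous (fun t : ℝ => (1+|t|) ^ β * deriv u t) := (weight_cont _).mul cu'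
  have hGs : HasCompactSupport (fun t : ℝ => (1+|t|) ^ (β-1) * u t) := hsupp.mul_left
  have hFs : HasCompactSupport (fun t : ℝ => (1+|t|) ^ β * deriv u t) := hsupp.deriv.mul_left
  have hG2 : Integrable (fun t : ℝ => ((1+|t|) ^ (β-1) * u t)^2) :=
    (hGc.pow 2).integrable_of_hasCompactSupport
      (by have := hGs.comp_left (g := fun x : ℝ => x^2) (by simp); exact this)
  have hP : Integrable (fun t : ℝ => (1+|t|) ^ β * deriv u t * ((1+|t|) ^ (β-1) * u t)) :=
    (hFc.mul hGc).integrable_of_hasCompactSupport hFs.mul_right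
  -- the sign term squared equals the plain term squared a.e.
  have hae : ∀ᵐ t : ℝ, t ≠ 0 := by
    rw [ae_iff]
    simpa using Real.volume_singleton (x := 0)
  have hsgn : (∫ t, ((1 + |t|) ^ β * deriv u t * Real.sign t) ^ 2)
      = ∫ t, ((1 + |t|) ^ β * deriv u t) ^ 2 := by
    refine integral_congr_ae ?_
    filter_upwards [hae] with t ht
    rcases ht.lt_or_gt with h | h
    · rw [Real.sign_of_neg h]; ring
    · rw [Real.sign_of_pos h]; ring
  refine ⟨?_, le_of_eq (by rw [hsgn])⟩
  rw [hsgn]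
  -- integration by parts on both half-lines
  have hibpR := ibp_half u hu hsupp β
  have hvc : ContDiff ℝ (⊤ : ℕ∞) (fun t : ℝ => u (-t)) := hu.comp contDiff_neg
  have hvs : HasCompactSupport (fun t : ℝ => u (-t)) :=
    hsupp.comp_homeomorph (Homeomorph.neg ℝ)
  have hvd : ∀ x : ℝ, deriv (fun t : ℝ => u (-t)) x = -deriv u (-x) := by
    intro x
    have h := ((hdiff (-x)).hasDerivAt).comp x (hasDerivAt_neg x)
    simpa [Function.comp_def] using h.deriv
  have hibpL : ∫ t in Iio (0:ℝ),
      ((2*β-1) * ((1+|t|) ^ (β-1) * u t)^2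
        - 2 * ((1+|t|) ^ β * deriv u t * ((1+|t|) ^ (β-1) * u t))) = -(u 0)^2 := by
    have h := ibp_half (fun t : ℝ => u (-t)) hvc hvs β
    simp only [hvd, neg_zero] at h
    have e3 := integral_comp_neg_Ioi (0:ℝ) (fun s : ℝ =>
      (2*β-1) * ((1+|s|) ^ (β-1) * u s)^2
        - 2 * ((1+|s|) ^ β * deriv u s * ((1+|s|) ^ (β-1) * u s)))
    rw [neg_zero, integral_Iic_eq_integral_Iio] at e3
    rw [← e3, ← h]
    refine setIntegral_congr_fun measurableSet_Ioi (fun t ht => ?_)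
    simp only [abs_neg]
    ring
  -- linear splits
  have hibpR' : (2*β-1) * (∫ t in Ioi (0:ℝ), ((1+|t|) ^ (β-1) * u t)^2)
      + 2 * (∫ t in Ioi (0:ℝ), (1+|t|) ^ β * deriv u t * ((1+|t|) ^ (β-1) * u t))
      = -(u 0)^2 := by
    rw [← integral_const_mul, ← integral_const_mul,
      ← integral_add (hG2.integrableOn.const_mul _) (hP.integrableOn.const_mul _)]
    exact hibpR
  have hibpL' : (2*β-1) * (∫ t in Iio (0:ℝ), ((1+|t|) ^ (β-1) * u t)^2)
      - 2 * (∫ t in Iio (0:ℝ), (1+|t|) ^ β * deriv u t * ((1+|t|) ^ (β-1) * u t))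
      = -(u 0)^2 := by
    rw [← integral_const_mul, ← integral_const_mul,
      ← integral_sub (hG2.integrableOn.const_mul _) (hP.integrableOn.const_mul _)]
    exact hibpL
  have hXsplit : (∫ t : ℝ, ((1+|t|) ^ (β-1) * u t)^2)
      = (∫ t in Iio (0:ℝ), ((1+|t|) ^ (β-1) * u t)^2)
        + ∫ t in Ioi (0:ℝ), ((1+|t|) ^ (β-1) * u t)^2 := by
    rw [← intervalIntegral.integral_Iio_add_Ici hG2.integrableOn hG2.integrableOn,
      integral_Ici_eq_integral_Ioi]
  have hNsplit : (∫ t : ℝ, |(1+|t|) ^ β * deriv u t * ((1+|t|) ^ (β-1) * u t)|)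
      = (∫ t in Iio (0:ℝ), |(1+|t|) ^ β * deriv u t * ((1+|t|) ^ (β-1) * u t)|)
        + ∫ t in Ioi (0:ℝ), |(1+|t|) ^ β * deriv u t * ((1+|t|) ^ (β-1) * u t)| := by
    rw [← intervalIntegral.integral_Iio_add_Ici hP.abs.integrableOn hP.abs.integrableOn,
      integral_Ici_eq_integral_Ioi]
  have hJR : |∫ t in Ioi (0:ℝ), (1+|t|) ^ β * deriv u t * ((1+|t|) ^ (β-1) * u t)|
      ≤ ∫ t in Ioi (0:ℝ), |(1+|t|) ^ β * deriv u t * ((1+|t|) ^ (β-1) * u t)| := by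
    simpa only [Real.norm_eq_abs] using norm_integral_le_integral_norm
      (μ := volume.restrict (Ioi (0:ℝ)))
      (f := fun t : ℝ => (1+|t|) ^ β * deriv u t * ((1+|t|) ^ (β-1) * u t))
  have hJL : |∫ t in Iio (0:ℝ), (1+|t|) ^ β * deriv u t * ((1+|t|) ^ (β-1) * u t)|
      ≤ ∫ t in Iio (0:ℝ), |(1+|t|) ^ β * deriv u t * ((1+|t|) ^ (β-1) * u t)| := by
    simpa only [Real.norm_eq_abs] using norm_integral_le_integral_norm
      (μ := volume.restrict (Iio (0:ℝ)))
      (f := fun t : ℝ => (1+|t|) ^ β * deriv u t * ((1+|t|) ^ (β-1) * u t))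
  -- Cauchy-Schwarz
  have hCS : (∫ t : ℝ, |(1+|t|) ^ β * deriv u t * ((1+|t|) ^ (β-1) * u t)|)
      ≤ Real.sqrt (∫ t : ℝ, ((1+|t|) ^ β * deriv u t)^2)
        * Real.sqrt (∫ t : ℝ, ((1+|t|) ^ (β-1) * u t)^2) := by
    have hpq : (2:ℝ).HolderConjugate 2 := Real.HolderConjugate.two_two
    have hMemF : MemLp (fun t : ℝ => (1+|t|) ^ β * deriv u t) (ENNReal.ofReal 2) volume :=
      hFc.memLp_of_hasCompactSupport hFs
    have hMemG : MemLp (fun t : ℝ => (1+|t|) ^ (β-1) * u t) (ENNReal.ofReal 2) volume :=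
      hGc.memLp_of_hasCompactSupport hGs
    have hCS0 := integral_mul_norm_le_Lp_mul_Lq hpq hMemF hMemG
    have e1 : ∀ x : ℝ, ‖x‖ ^ (2:ℝ) = x^2 := fun x => by
      rw [show (2:ℝ) = ((2:ℕ):ℝ) by norm_num, Real.rpow_natCast]
      simp [Real.norm_eq_abs, sq_abs]
    calc (∫ t : ℝ, |(1+|t|) ^ β * deriv u t * ((1+|t|) ^ (β-1) * u t)|)
        = ∫ t : ℝ, ‖(1+|t|) ^ β * deriv u t‖ * ‖(1+|t|) ^ (β-1) * u t‖ := by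
          simp [Real.norm_eq_abs, abs_mul]
      _ ≤ (∫ t : ℝ, ‖(1+|t|) ^ β * deriv u t‖ ^ (2:ℝ)) ^ ((1:ℝ)/2)
          * (∫ t : ℝ, ‖(1+|t|) ^ (β-1) * u t‖ ^ (2:ℝ)) ^ ((1:ℝ)/2) := hCS0
      _ = Real.sqrt (∫ t : ℝ, ((1+|t|) ^ β * deriv u t)^2)
          * Real.sqrt (∫ t : ℝ, ((1+|t|) ^ (β-1) * u t)^2) := by
          simp_rw [e1]
          rw [← Real.sqrt_eq_rpow, ← Real.sqrt_eq_rpow]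
  -- final arithmetic
  have hX0 : 0 ≤ ∫ t : ℝ, ((1+|t|) ^ (β-1) * u t)^2 := integral_nonneg fun t => sq_nonneg _
  have hA0 : 0 ≤ ∫ t : ℝ, ((1+|t|) ^ β * deriv u t)^2 := integral_nonneg fun t => sq_nonneg _
  have hQsq : Real.sqrt (∫ t : ℝ, ((1+|t|) ^ (β-1) * u t)^2) ^ 2
      = ∫ t : ℝ, ((1+|t|) ^ (β-1) * u t)^2 := Real.sq_sqrt hX0
  have hQ0 : 0 ≤ Real.sqrt (∫ t : ℝ, ((1+|t|) ^ (β-1) * u t)^2) := Real.sqrt_nonneg _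
  have hS0 : 0 ≤ Real.sqrt (∫ t : ℝ, ((1+|t|) ^ β * deriv u t)^2) := Real.sqrt_nonneg _
  have hJb : |(∫ t in Ioi (0:ℝ), (1+|t|) ^ β * deriv u t * ((1+|t|) ^ (β-1) * u t))
      - ∫ t in Iio (0:ℝ), (1+|t|) ^ β * deriv u t * ((1+|t|) ^ (β-1) * u t)|
      ≤ Real.sqrt (∫ t : ℝ, ((1+|t|) ^ β * deriv u t)^2)
        * Real.sqrt (∫ t : ℝ, ((1+|t|) ^ (β-1) * u t)^2) := by
    have htri := abs_sub (∫ t in Ioi (0:ℝ), (1+|t|) ^ β * deriv u t * ((1+|t|) ^ (β-1) * u t))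
      (∫ t in Iio (0:ℝ), (1+|t|) ^ β * deriv u t * ((1+|t|) ^ (β-1) * u t))
    linarith [hJR, hJL, hNsplit, hCS, htri]
  have hcX : (2*β-1) * (∫ t : ℝ, ((1+|t|) ^ (β-1) * u t)^2)
      = (2*β-1) * (∫ t in Iio (0:ℝ), ((1+|t|) ^ (β-1) * u t)^2)
        + (2*β-1) * (∫ t in Ioi (0:ℝ), ((1+|t|) ^ (β-1) * u t)^2) := by
    rw [hXsplit]; ring
  rcases le_or_gt 0 (2*β-1) with hcpos | hcneg
  · rw [min_eq_left hcpos]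
    simp only [mul_zero, abs_zero, Real.sqrt_zero, zero_mul, add_zero]
    rw [abs_of_nonneg hcpos]
    have h1 : (2*β-1) * (∫ t : ℝ, ((1+|t|) ^ (β-1) * u t)^2)
        ≤ 2 * (Real.sqrt (∫ t : ℝ, ((1+|t|) ^ β * deriv u t)^2)
          * Real.sqrt (∫ t : ℝ, ((1+|t|) ^ (β-1) * u t)^2)) := by
      have hnab := neg_abs_le ((∫ t in Ioi (0:ℝ), (1+|t|) ^ β * deriv u t * ((1+|t|) ^ (β-1) * u t))
        - ∫ t in Iio (0:ℝ), (1+|t|) ^ β * deriv u t * ((1+|t|) ^ (β-1) * u t))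
      linarith [hibpR', hibpL', hcX, hJb, hnab, sq_nonneg (u 0)]
    rcases eq_or_lt_of_le hQ0 with hq | hq
    · rw [← hq, mul_zero]
      positivity
    · have h2 : (2*β-1) * Real.sqrt (∫ t : ℝ, ((1+|t|) ^ (β-1) * u t)^2)
          * Real.sqrt (∫ t : ℝ, ((1+|t|) ^ (β-1) * u t)^2)
          ≤ 2 * Real.sqrt (∫ t : ℝ, ((1+|t|) ^ β * deriv u t)^2)
            * Real.sqrt (∫ t : ℝ, ((1+|t|) ^ (β-1) * u t)^2) := by nlinarith [h1, hQsq]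
      exact le_of_mul_le_mul_right h2 hq
  · rw [min_eq_right hcneg.le, abs_of_neg (show 2*(2*β-1) < 0 by linarith),
      abs_of_neg hcneg]
    have h1 : (-(2*β-1)) * (∫ t : ℝ, ((1+|t|) ^ (β-1) * u t)^2)
        ≤ 2 * (Real.sqrt (∫ t : ℝ, ((1+|t|) ^ β * deriv u t)^2)
          * Real.sqrt (∫ t : ℝ, ((1+|t|) ^ (β-1) * u t)^2)) + 2 * (u 0)^2 := by
      have hle := le_abs_self ((∫ t in Ioi (0:ℝ), (1+|t|) ^ β * deriv u t * ((1+|t|) ^ (β-1) * u t))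
        - ∫ t in Iio (0:ℝ), (1+|t|) ^ β * deriv u t * ((1+|t|) ^ (β-1) * u t))
      linarith [hibpR', hibpL', hcX, hJb, hle]
    have hr2 : Real.sqrt (-(2*(2*β-1))) ^ 2 = -(2*(2*β-1)) := Real.sq_sqrt (by linarith)
    have hr0 : 0 ≤ Real.sqrt (-(2*(2*β-1))) := Real.sqrt_nonneg _
    have hR2 : (Real.sqrt (-(2*(2*β-1))) * |u 0|) ^ 2 = (-(2*(2*β-1))) * (u 0)^2 := by
      rw [mul_pow, hr2, sq_abs]
    have hR0 : 0 ≤ Real.sqrt (-(2*(2*β-1))) * |u 0| := mul_nonneg hr0 (abs_nonneg _)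
    by_contra hcon
    push_neg at hcon
    have hEQ : 0 < (-(2*β-1)) * Real.sqrt (∫ t : ℝ, ((1+|t|) ^ (β-1) * u t)^2) := by
      calc (0:ℝ) ≤ 2 * Real.sqrt (∫ t : ℝ, ((1+|t|) ^ β * deriv u t)^2)
            + Real.sqrt (-(2*(2*β-1))) * |u 0| := by positivity
        _ < _ := hcon
    have k2 : ((-(2*β-1)) * Real.sqrt (∫ t : ℝ, ((1+|t|) ^ (β-1) * u t)^2)
        - 2 * Real.sqrt (∫ t : ℝ, ((1+|t|) ^ β * deriv u t)^2)
        - Real.sqrt (-(2*(2*β-1))) * |u 0|)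
        * ((-(2*β-1)) * Real.sqrt (∫ t : ℝ, ((1+|t|) ^ (β-1) * u t)^2)) > 0 :=
      mul_pos (by linarith) hEQ
    have k3 : ((-(2*β-1)) * Real.sqrt (∫ t : ℝ, ((1+|t|) ^ (β-1) * u t)^2)
        - 2 * Real.sqrt (∫ t : ℝ, ((1+|t|) ^ β * deriv u t)^2)
        - Real.sqrt (-(2*(2*β-1))) * |u 0|)
        * (Real.sqrt (-(2*(2*β-1))) * |u 0|) ≥ 0 :=
      mul_nonneg (by linarith) hR0
    have h1' : (-(2*β-1)) * Real.sqrt (∫ t : ℝ, ((1+|t|) ^ (β-1) * u t)^2) ^ 2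
        ≤ 2 * (Real.sqrt (∫ t : ℝ, ((1+|t|) ^ β * deriv u t)^2)
          * Real.sqrt (∫ t : ℝ, ((1+|t|) ^ (β-1) * u t)^2)) + 2 * (u 0)^2 := by
      rw [hQsq]; exact h1
    have k1 : (-(2*β-1)) * ((-(2*β-1)) * Real.sqrt (∫ t : ℝ, ((1+|t|) ^ (β-1) * u t)^2) ^ 2)
        ≤ (-(2*β-1)) * (2 * (Real.sqrt (∫ t : ℝ, ((1+|t|) ^ β * deriv u t)^2)
          * Real.sqrt (∫ t : ℝ, ((1+|t|) ^ (β-1) * u t)^2)) + 2 * (u 0)^2) :=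
      mul_le_mul_of_nonneg_left h1' (by linarith)
    linarith [k1, k2, k3, hR2, mul_nonneg hS0 hR0]
end

section
/- First functional a posteriori estimate (abstract form): let H be a real Hilbert space, V a closed subspace, and suppose given bounded linear maps G : H → L (the 'gradient' into a Hilbert space L) and constants c_N, c_A > 0 such that ‖w‖_{-1} ≤ c_N ‖G w‖_L and c_A ‖ξ‖² ≤ ⟨Aξ,ξ⟩ for a bounded symmetric positive operator A on L. Let u solve ⟨A G u, G w⟩ = ⟨f, w⟩ for all w ∈ V, and let v ∈ H with u - v ∈ V. Then for every y ∈ L with a well-defined divergence satisfying ⟨div y, w⟩ + ⟨y, G w⟩ = 0 for all w ∈ V, one has ‖G(u-v)‖_A ≤ (c_N/√c_A) ‖f + div y‖_{1} + ‖y - A G v‖_{A^{-1}}, where ‖ξ‖_A = ⟨Aξ,ξ⟩^{1/2} and ‖ξ‖_{A^{-1}} = ⟨A^{-1}ξ,ξ⟩^{1/2}. -/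
open scoped RealInnerProductSpace

lemma acs {L : Type*} [NormedAddCommGroup L] [InnerProductSpace ℝ L]
    (A : L →L[ℝ] L) (hAsymm : ∀ ξ η : L, ⟪A ξ, η⟫ = ⟪ξ, A η⟫)
    (cA : ℝ) (hcA : 0 < cA) (hell : ∀ ξ : L, cA * ‖ξ‖ ^ 2 ≤ ⟪A ξ, ξ⟫)
    (ξ η : L) : ⟪A ξ, η⟫ ≤ Real.sqrt ⟪A ξ, ξ⟫ * Real.sqrt ⟪A η, η⟫ := by
  have hpos : ∀ ζ : L, (0:ℝ) ≤ ⟪A ζ, ζ⟫ := fun ζ =>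
    le_trans (by positivity) (hell ζ)
  by_cases hη : η = 0
  · simp [hη]
  · have hηpos : (0:ℝ) < ⟪A η, η⟫ := by
      have h : (0:ℝ) < cA * ‖η‖ ^ 2 := by
        have : ‖η‖ > 0 := norm_pos_iff.mpr hη
        positivity
      linarith [hell η]
    set t : ℝ := ⟪A ξ, η⟫ / ⟪A η, η⟫ with ht
    have hexp : (0:ℝ) ≤ ⟪A (ξ - t • η), ξ - t • η⟫ := hpos _
    have hsym : ⟪A η, ξ⟫ = ⟪A ξ, η⟫ := by
      rw [hAsymm, real_inner_comm]
    have hexp2 : ⟪A (ξ - t • η), ξ - t • η⟫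
        = ⟪A ξ, ξ⟫ - 2 * t * ⟪A ξ, η⟫ + t ^ 2 * ⟪A η, η⟫ := by
      simp only [map_sub, map_smul, inner_sub_left, inner_sub_right,
        real_inner_smul_left, real_inner_smul_right, hsym]
      ring
    have hkey : ⟪A ξ, η⟫ ^ 2 ≤ ⟪A ξ, ξ⟫ * ⟪A η, η⟫ := by
      rw [hexp2] at hexp
      have hne : ⟪A η, η⟫ ≠ 0 := ne_of_gt hηpos
      have htZ : t * ⟪A η, η⟫ = ⟪A ξ, η⟫ := div_mul_cancel₀ _ hne
      nlinarith [hexp, hηpos, htZ]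
    calc ⟪A ξ, η⟫ ≤ |⟪A ξ, η⟫| := le_abs_self _
      _ = Real.sqrt (⟪A ξ, η⟫ ^ 2) := (Real.sqrt_sq_eq_abs _).symm
      _ ≤ Real.sqrt (⟪A ξ, ξ⟫ * ⟪A η, η⟫) := Real.sqrt_le_sqrt hkey
      _ = Real.sqrt ⟪A ξ, ξ⟫ * Real.sqrt ⟪A η, η⟫ := Real.sqrt_mul (hpos ξ) _

/-- First functional a posteriori estimate (abstract form of
Proposition 2.1 / estimate (2.10)). `H` is the energy space, `L` the space of
fluxes (gradients), `X` the weighted space `L²_1` containing `f` and `div y`,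
`pair` the duality pairing of `X` with `H`, `nm1` the weighted `‖·‖_{-1}` norm,
`G` the gradient, `A` the elliptic operator with inverse `Ainv`.
Then `‖G(u-v)‖_A ≤ (c_N/√c_A) ‖f + div y‖₁ + ‖y - A G v‖_{A⁻¹}`. -/
theorem first_functional_estimate
    {H L X : Type*} [NormedAddCommGroup H] [InnerProductSpace ℝ H]
    [NormedAddCommGroup L] [InnerProductSpace ℝ L]
    [NormedAddCommGroup X] [InnerProductSpace ℝ X]
    (V : Submodule ℝ H) (G : H →L[ℝ] L)
    (A Ainv : L →L[ℝ] L)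
    (hAsymm : ∀ ξ η, ⟪A ξ, η⟫ = ⟪ξ, A η⟫)
    (cA : ℝ) (hcA : 0 < cA) (hell : ∀ ξ, cA * ‖ξ‖ ^ 2 ≤ ⟪A ξ, ξ⟫)
    (hAinv : ∀ ξ, A (Ainv ξ) = ξ) (hAinv' : ∀ ξ, Ainv (A ξ) = ξ)
    (cN : ℝ) (hcN : 0 < cN)
    (nm1 : H → ℝ) (hnm1 : ∀ w ∈ V, nm1 w ≤ cN * ‖G w‖)
    (pair : X → H → ℝ)
    (hpair_add : ∀ g₁ g₂ w, pair (g₁ + g₂) w = pair g₁ w + pair g₂ w)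
    (hCS : ∀ g w, |pair g w| ≤ ‖g‖ * nm1 w)
    (u v : H) (huv : u - v ∈ V) (f : X)
    (hu : ∀ w ∈ V, ⟪A (G u), G w⟫ = pair f w)
    (y : L) (dy : X)
    (hdiv : ∀ w ∈ V, pair dy w + ⟪y, G w⟫ = 0) :
    Real.sqrt ⟪A (G (u - v)), G (u - v)⟫ ≤
      (cN / Real.sqrt cA) * ‖f + dy‖ +
        Real.sqrt ⟪Ainv (y - A (G v)), y - A (G v)⟫ := by
  set e := u - v with he
  set ρ := y - A (G v) with hρ
  set P : ℝ := ⟪A (G e), G e⟫ with hP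
  have hpos : ∀ ζ : L, (0:ℝ) ≤ ⟪A ζ, ζ⟫ := fun ζ =>
    le_trans (by positivity) (hell ζ)
  have hPnn : 0 ≤ P := hpos _
  set t := Real.sqrt P with htdef
  have htnn : 0 ≤ t := Real.sqrt_nonneg _
  have ht2 : t ^ 2 = P := Real.sq_sqrt hPnn
  -- key identity
  have hGe : G e = G u - G v := by rw [he, map_sub]
  have hid : P = pair (f + dy) e + ⟪ρ, G e⟫ := by
    have h1 : ⟪A (G u), G e⟫ = pair f e := hu e huv
    have h2 : pair dy e = -⟪y, G e⟫ := by linarith [hdiv e huv]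
    have h3 : ⟪A (G e), G e⟫ = ⟪A (G u), G e⟫ - ⟪A (G v), G e⟫ := by
      rw [hGe, map_sub, inner_sub_left]
    rw [hP, h3, h1, hpair_add, h2, hρ, inner_sub_left]
    ring
  -- bound on first term
  have hsA : (0:ℝ) < Real.sqrt cA := Real.sqrt_pos.mpr hcA
  have hnGe : ‖G e‖ ≤ t / Real.sqrt cA := by
    have h2 : ‖G e‖ ^ 2 ≤ P / cA := by
      rw [le_div_iff₀ hcA]; linarith [hell (G e)]
    calc ‖G e‖ = Real.sqrt (‖G e‖ ^ 2) := (Real.sqrt_sq (norm_nonneg _)).symm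
      _ ≤ Real.sqrt (P / cA) := Real.sqrt_le_sqrt h2
      _ = t / Real.sqrt cA := by rw [Real.sqrt_div hPnn]
  have hb1 : pair (f + dy) e ≤ (cN / Real.sqrt cA) * ‖f + dy‖ * t := by
    have h1 : pair (f + dy) e ≤ ‖f + dy‖ * nm1 e :=
      le_trans (le_abs_self _) (hCS _ _)
    have h2 : nm1 e ≤ cN * ‖G e‖ := hnm1 e huv
    have h3 : nm1 e ≤ cN * (t / Real.sqrt cA) :=
      le_trans h2 (by
        exact mul_le_mul_of_nonneg_left hnGe (le_of_lt hcN))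
    calc pair (f + dy) e ≤ ‖f + dy‖ * nm1 e := h1
      _ ≤ ‖f + dy‖ * (cN * (t / Real.sqrt cA)) :=
          mul_le_mul_of_nonneg_left h3 (norm_nonneg _)
      _ = (cN / Real.sqrt cA) * ‖f + dy‖ * t := by ring
  -- bound on second term
  set S := Real.sqrt ⟪Ainv ρ, ρ⟫ with hSdef
  have hb2 : ⟪ρ, G e⟫ ≤ S * t := by
    have h1 : ⟪ρ, G e⟫ = ⟪A (Ainv ρ), G e⟫ := by rw [hAinv]
    have h2 : ⟪A (Ainv ρ), G e⟫ ≤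
        Real.sqrt ⟪A (Ainv ρ), Ainv ρ⟫ * Real.sqrt ⟪A (G e), G e⟫ :=
      acs A hAsymm cA hcA hell _ _
    have h3 : ⟪A (Ainv ρ), Ainv ρ⟫ = ⟪Ainv ρ, ρ⟫ := by
      rw [hAsymm, hAinv]
    rw [h1]
    calc ⟪A (Ainv ρ), G e⟫ ≤ _ := h2
      _ = S * t := by rw [h3]
  -- combine
  have hC : P ≤ ((cN / Real.sqrt cA) * ‖f + dy‖ + S) * t := by
    rw [hid]; nlinarith [hb1, hb2]
  have hCnn : 0 ≤ (cN / Real.sqrt cA) * ‖f + dy‖ + S := by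
    have : 0 ≤ S := Real.sqrt_nonneg _
    positivity
  rcases eq_or_lt_of_le htnn with h0 | h0
  · exact le_trans (le_of_eq h0.symm) hCnn
  · nlinarith [hC, ht2, h0]
end

section
/- Sharpness of the error majorant: in the setting of the first functional a posteriori estimate, if v = u and y = A G u, then both terms on the right-hand side vanish, so the estimate holds with equality (0 = 0); conversely if the right-hand side is zero then ⟨f + div y, w⟩ = 0 and y = A G v, which forces G(u - v) = 0. -/
open scoped RealInnerProductSpace

/-- Sharpness of the error majorant. In the abstract setting of the
first functional a posteriori estimate: if `v = u` and `y = A G u` then both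
residual terms vanish; conversely, if `f + div y = 0` and `y = A G v` then
`G(u - v) = 0`. -/
theorem error_majorant_sharpness
    {H L X : Type*} [NormedAddCommGroup H] [InnerProductSpace ℝ H]
    [NormedAddCommGroup L] [InnerProductSpace ℝ L]
    [NormedAddCommGroup X] [InnerProductSpace ℝ X]
    (V : Submodule ℝ H) (G : H →L[ℝ] L)
    (A : L →L[ℝ] L)
    (cA : ℝ) (hcA : 0 < cA) (hell : ∀ ξ, cA * ‖ξ‖ ^ 2 ≤ ⟪A ξ, ξ⟫)
    (pair : X → H → ℝ)
    (hpair_add : ∀ g₁ g₂ w, pair (g₁ + g₂) w = pair g₁ w + pair g₂ w)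
    (u v : H) (huv : u - v ∈ V) (f : X)
    (hu : ∀ w ∈ V, ⟪A (G u), G w⟫ = pair f w)
    (y : L) (dy : X)
    (hdiv : ∀ w ∈ V, pair dy w + ⟪y, G w⟫ = 0) :
    (v = u ∧ y = A (G u) →
      y - A (G v) = 0 ∧ ∀ w ∈ V, pair f w + pair dy w = 0) ∧
    (f + dy = 0 ∧ y = A (G v) →
      G (u - v) = 0) := by
  constructor
  · rintro ⟨rfl, rfl⟩
    refine ⟨by simp, fun w hw => ?_⟩
    have h1 := hu w hw
    have h2 := hdiv w hw
    linarith
  · rintro ⟨hfd, rfl⟩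
    have hw := huv
    have hpair0 : pair 0 (u - v) = 0 := by
      have := hpair_add 0 0 (u - v)
      simpa using this
    have h1 := hu (u - v) hw
    have h2 := hdiv (u - v) hw
    have h3 : pair f (u - v) + pair dy (u - v) = 0 := by
      rw [← hpair_add, hfd, hpair0]
    have h4 : ⟪A (G (u - v)), G (u - v)⟫ = 0 := by
      have : ⟪A (G u), G (u - v)⟫ - ⟪A (G v), G (u - v)⟫ = 0 := by linarith
      rw [← inner_sub_left] at this
      simpa [map_sub] using this
    have h5 := hell (G (u - v))
    have h6 : ‖G (u - v)‖ ^ 2 ≤ 0 := by nlinarith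
    have : ‖G (u - v)‖ = 0 := by nlinarith [sq_nonneg ‖G (u - v)‖, norm_nonneg (G (u - v))]
    exact norm_eq_zero.mp this
end

section
/- Third functional a posteriori estimate (abstract broken-field form): in the abstract Hilbert space setting, suppose the residual functional decomposes as Φ(w) = ⟨f + div y_i, w⟩_{Ω_i} + ⟨f + div y_e, w⟩_{Ω_e} + ⟨y - A G v, G w⟩ + ⟨j, τ w⟩_Γ, where each term is bounded: |⟨f+div y_i, w⟩_{Ω_i}| ≤ c_o ‖f+div y_i‖ ‖Gw‖_A, |⟨f+div y_e, w⟩_{Ω_e}| ≤ (c_N/√c_A) ‖f+div y_e‖_1 ‖Gw‖_A, |⟨y - AGv, Gw⟩| ≤ ‖y-AGv‖_{A^{-1}} ‖Gw‖_A, and |⟨j, τw⟩| ≤ c_Γ ‖j‖_{H^{-1/2}} ‖Gw‖_A. Then ‖G(u-v)‖_A ≤ c_o ‖f+div y_i‖ + (c_N/√c_A)‖f+div y_e‖_1 + ‖y - AGv‖_{A^{-1}} + c_Γ ‖j‖_{H^{-1/2}} + 2‖G d‖_A for any d with u - v - d ∈ V. -/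
open scoped RealInnerProductSpace

lemma semi_cs {L : Type*} [NormedAddCommGroup L] [InnerProductSpace ℝ L]
    (A : L →L[ℝ] L) (hAsymm : ∀ ξ η, ⟪A ξ, η⟫ = ⟪ξ, A η⟫)
    (hApos : ∀ ξ, 0 ≤ ⟪A ξ, ξ⟫) (ξ η : L) :
    ⟪A ξ, η⟫ ≤ Real.sqrt ⟪A ξ, ξ⟫ * Real.sqrt ⟪A η, η⟫ := by
  have hsym : ∀ x y : L, ⟪A x, y⟫ = ⟪A y, x⟫ := by
    intro x y
    rw [hAsymm, real_inner_comm]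
  have key : ∀ t : ℝ, 0 ≤ ⟪A ξ, ξ⟫ * (t * t) + (2 * ⟪A ξ, η⟫) * t + ⟪A η, η⟫ := by
    intro t
    have h := hApos (t • ξ + η)
    have hexp : ⟪A (t • ξ + η), t • ξ + η⟫ =
        ⟪A ξ, ξ⟫ * (t * t) + (2 * ⟪A ξ, η⟫) * t + ⟪A η, η⟫ := by
      rw [map_add, map_smul]
      simp only [inner_add_left, inner_add_right, real_inner_smul_left,
        real_inner_smul_right, ContinuousLinearMap.coe_smul', Pi.smul_apply,
        inner_smul_left, inner_smul_right, starRingEnd_apply, star_trivial]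
      rw [hsym η ξ]
      ring
    linarith [hexp ▸ h]
  have hd : discrim ⟪A ξ, ξ⟫ (2 * ⟪A ξ, η⟫) ⟪A η, η⟫ ≤ 0 :=
    discrim_le_zero key
  rw [discrim] at hd
  have h2 : ⟪A ξ, η⟫ ^ 2 ≤ ⟪A ξ, ξ⟫ * ⟪A η, η⟫ := by nlinarith
  calc ⟪A ξ, η⟫ ≤ |⟪A ξ, η⟫| := le_abs_self _
    _ = Real.sqrt (⟪A ξ, η⟫ ^ 2) := (Real.sqrt_sq_eq_abs _).symm
    _ ≤ Real.sqrt (⟪A ξ, ξ⟫ * ⟪A η, η⟫) := Real.sqrt_le_sqrt h2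
    _ = Real.sqrt ⟪A ξ, ξ⟫ * Real.sqrt ⟪A η, η⟫ := Real.sqrt_mul (hApos ξ) _

lemma semi_tri {L : Type*} [NormedAddCommGroup L] [InnerProductSpace ℝ L]
    (A : L →L[ℝ] L) (hAsymm : ∀ ξ η, ⟪A ξ, η⟫ = ⟪ξ, A η⟫)
    (hApos : ∀ ξ, 0 ≤ ⟪A ξ, ξ⟫) (x y : L) :
    Real.sqrt ⟪A (x + y), x + y⟫ ≤ Real.sqrt ⟪A x, x⟫ + Real.sqrt ⟪A y, y⟫ := by
  have hsym : ⟪A y, x⟫ = ⟪A x, y⟫ := by rw [hAsymm, real_inner_comm]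
  have hexp : ⟪A (x + y), x + y⟫ = ⟪A x, x⟫ + 2 * ⟪A x, y⟫ + ⟪A y, y⟫ := by
    rw [map_add]
    simp only [inner_add_left, inner_add_right]
    linarith [hsym]
  have hcs := semi_cs A hAsymm hApos x y
  have h1 : ⟪A (x + y), x + y⟫ ≤ (Real.sqrt ⟪A x, x⟫ + Real.sqrt ⟪A y, y⟫) ^ 2 := by
    rw [hexp]
    have hx := Real.sq_sqrt (hApos x)
    have hy := Real.sq_sqrt (hApos y)
    nlinarith
  calc Real.sqrt ⟪A (x + y), x + y⟫ ≤ Real.sqrt ((Real.sqrt ⟪A x, x⟫ + Real.sqrt ⟪A y, y⟫) ^ 2) :=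
        Real.sqrt_le_sqrt h1
    _ = |_| := Real.sqrt_sq_eq_abs _
    _ = _ := abs_of_nonneg (by positivity)

/-- Third functional a posteriori estimate (abstract broken-field
form of Proposition 2.3). The residual functional `Φ(w) = ⟨A G(u-v), G w⟩`
decomposes on `V` into four terms `T1,…,T4` (interior equilibrium residual,
exterior equilibrium residual, flux residual, and jump of normal traces across
the interface), each bounded by its coefficient times the energy norm `‖Gw‖_A`.
Then `‖G(u-v)‖_A ≤ c_o‖f+div yᵢ‖ + (c_N/√c_A)‖f+div yₑ‖₁ + ‖y-AGv‖_{A⁻¹}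
+ c_Γ‖j‖_{H^{-1/2}} + 2‖Gd‖_A` for any `d` with `u - v - d ∈ V`. -/
theorem third_functional_estimate
    {H L : Type*} [NormedAddCommGroup H] [InnerProductSpace ℝ H]
    [NormedAddCommGroup L] [InnerProductSpace ℝ L]
    (V : Submodule ℝ H) (G : H →L[ℝ] L) (A : L →L[ℝ] L)
    (hAsymm : ∀ ξ η, ⟪A ξ, η⟫ = ⟪ξ, A η⟫)
    (hApos : ∀ ξ, 0 ≤ ⟪A ξ, ξ⟫)
    (u v d : H) (hvd : u - v - d ∈ V)
    (T1 T2 T3 T4 : H → ℝ)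
    (co cN cA cΓ nfi nfe nyA nj : ℝ)
    (hco : 0 ≤ co) (hcN : 0 ≤ cN) (hcA : 0 < cA) (hcΓ : 0 ≤ cΓ)
    (hnfi : 0 ≤ nfi) (hnfe : 0 ≤ nfe) (hnyA : 0 ≤ nyA) (hnj : 0 ≤ nj)
    (hΦ : ∀ w ∈ V, ⟪A (G (u - v)), G w⟫ = T1 w + T2 w + T3 w + T4 w)
    (hT1 : ∀ w ∈ V, |T1 w| ≤ co * nfi * Real.sqrt ⟪A (G w), G w⟫)
    (hT2 : ∀ w ∈ V, |T2 w| ≤ (cN / Real.sqrt cA) * nfe * Real.sqrt ⟪A (G w), G w⟫)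
    (hT3 : ∀ w ∈ V, |T3 w| ≤ nyA * Real.sqrt ⟪A (G w), G w⟫)
    (hT4 : ∀ w ∈ V, |T4 w| ≤ cΓ * nj * Real.sqrt ⟪A (G w), G w⟫) :
    Real.sqrt ⟪A (G (u - v)), G (u - v)⟫ ≤
      co * nfi + (cN / Real.sqrt cA) * nfe + nyA + cΓ * nj +
        2 * Real.sqrt ⟪A (G d), G d⟫ := by
  set e := u - v with he
  set w := e - d with hwdef
  have hwV : w ∈ V := hvd
  set a := Real.sqrt ⟪A (G e), G e⟫ with ha
  set b := Real.sqrt ⟪A (G d), G d⟫ with hb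
  set c := co * nfi + (cN / Real.sqrt cA) * nfe + nyA + cΓ * nj with hc
  have ha0 : 0 ≤ a := Real.sqrt_nonneg _
  have hb0 : 0 ≤ b := Real.sqrt_nonneg _
  have hc0 : 0 ≤ c := by
    have : 0 ≤ cN / Real.sqrt cA := div_nonneg hcN (Real.sqrt_nonneg _)
    positivity
  -- ‖Gw‖_A ≤ a + b
  have hwnorm : Real.sqrt ⟪A (G w), G w⟫ ≤ a + b := by
    have h1 := semi_tri A hAsymm hApos (G e) (-(G d))
    have h2 : G e + -(G d) = G w := by rw [hwdef]; simp [map_sub]; abel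
    have h3 : ⟪A (-(G d)), -(G d)⟫ = ⟪A (G d), G d⟫ := by
      rw [map_neg, inner_neg_neg]
    rw [h2, h3] at h1
    exact h1
  -- residual bound
  have hres : ⟪A (G e), G w⟫ ≤ c * (a + b) := by
    have h := hΦ w hwV
    have h1 := hT1 w hwV
    have h2 := hT2 w hwV
    have h3 := hT3 w hwV
    have h4 := hT4 w hwV
    have hsum : ⟪A (G e), G w⟫ ≤ c * Real.sqrt ⟪A (G w), G w⟫ := by
      rw [h, hc]
      have := abs_le.mp h1
      have := abs_le.mp h2
      have := abs_le.mp h3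
      have := abs_le.mp h4
      nlinarith [le_abs_self (T1 w), le_abs_self (T2 w), le_abs_self (T3 w),
        le_abs_self (T4 w)]
    calc ⟪A (G e), G w⟫ ≤ c * Real.sqrt ⟪A (G w), G w⟫ := hsum
      _ ≤ c * (a + b) := mul_le_mul_of_nonneg_left hwnorm hc0
  have hcs : ⟪A (G e), G d⟫ ≤ a * b := semi_cs A hAsymm hApos (G e) (G d)
  have hsplit : ⟪A (G e), G e⟫ = ⟪A (G e), G w⟫ + ⟪A (G e), G d⟫ := by
    have : G e = G w + G d := by rw [hwdef]; simp [map_sub]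
    rw [this, inner_add_right]
  have hasq : a * a = ⟪A (G e), G e⟫ := Real.mul_self_sqrt (hApos (G e))
  have hkey : a * a ≤ c * (a + b) + a * b := by
    rw [hasq, hsplit]; linarith
  show a ≤ c + 2 * b
  nlinarith [sq_nonneg (a - c - 2 * b), sq_nonneg (a - b), mul_nonneg ha0 hb0,
    mul_nonneg hb0 hc0, mul_nonneg ha0 hc0, sq_nonneg b, sq_nonneg (a - c)]
end
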